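/- arXiv:1904.01085 — 8 statements merged into one kernel-verified Lean document; each statement's English description precedes it below -/
import Mathlib

section
/- Every strongly L-selective T1 space is Fréchet–Urysohn. -/
open Topology Filter Set

/-- A set-valued mapping is lower semicontinuous if the preimage of every open set is open. -/
def IsLSC {Y X : Type*} [TopologicalSpace Y] [TopologicalSpace X] (φ : Y → Set X) : Prop :=
  ∀ U : Set X, IsOpen U → IsOpen {y | (φ y ∩ U).Nonempty}

/-- `X` is `Y`-selective: every l.s.c. closed-valued mapping from `Y` to `X` has a
continuous selection. -/
def Selective (Y X : Type*) [TopologicalSpace Y] [TopologicalSpace X] : Prop :=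
  ∀ φ : Y → Set X, (∀ y, (φ y).Nonempty) → (∀ y, IsClosed (φ y)) → IsLSC φ →
    ∃ f : Y → X, Continuous f ∧ ∀ y, f y ∈ φ y

/-- `X` is strongly `Y`-selective: every l.s.c. mapping from `Y` to the nonempty subsets
of `X` has a continuous selection. -/
def StronglySelective (Y X : Type*) [TopologicalSpace Y] [TopologicalSpace X] : Prop :=
  ∀ φ : Y → Set X, (∀ y, (φ y).Nonempty) → IsLSC φ →
    ∃ f : Y → X, Continuous f ∧ ∀ y, f y ∈ φ y

/-- Every strongly L-selective T1 space is Fréchet–Urysohn. -/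
theorem stmt_5 {X : Type*} [TopologicalSpace X] [T1Space X]
    (h : StronglySelective ℕ∞ X) : FrechetUrysohnSpace X := by
  constructor
  intro A p hp
  have hA : A.Nonempty := closure_nonempty_iff.mp ⟨p, hp⟩
  set φ : ℕ∞ → Set X := fun y => if y = ⊤ then {p} else A with hφ
  have hne : ∀ y, (φ y).Nonempty := by
    intro y
    by_cases hy : y = ⊤ <;> simp [hφ, hy, hA]
  have hlsc : IsLSC φ := by
    intro U hU
    by_cases hpU : p ∈ U
    · have hAU : (U ∩ A).Nonempty := mem_closure_iff.mp hp U hU hpU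
      have : {y : ℕ∞ | (φ y ∩ U).Nonempty} = univ := by
        ext y
        simp only [mem_setOf_eq, mem_univ, iff_true]
        by_cases hy : y = ⊤
        · exact ⟨p, by simp [hφ, hy, hpU]⟩
        · obtain ⟨x, hxU, hxA⟩ := hAU
          exact ⟨x, by simp [hφ, hy, hxU, hxA]⟩
      rw [this]; exact isOpen_univ
    · by_cases hAU : (A ∩ U).Nonempty
      · have : {y : ℕ∞ | (φ y ∩ U).Nonempty} = {⊤}ᶜ := by
          ext y
          by_cases hy : y = ⊤ <;> simp [hφ, hy, hpU, hAU]
        rw [this]; exact isClosed_singleton.isOpen_compl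
      · have : {y : ℕ∞ | (φ y ∩ U).Nonempty} = ∅ := by
          ext y
          by_cases hy : y = ⊤ <;> simp [hφ, hy, hpU, hAU]
        rw [this]; exact isOpen_empty
  obtain ⟨f, hfc, hfs⟩ := h φ hne hlsc
  have hftop : f ⊤ = p := by
    have := hfs ⊤
    simpa [hφ] using this
  have hmem : ∀ n : ℕ, f (n : ℕ∞) ∈ A := by
    intro n
    have := hfs (n : ℕ∞)
    simpa [hφ, (ENat.coe_ne_top n)] using this
  have hcoe : Tendsto (fun n : ℕ => (n : ℕ∞)) atTop (𝓝 ⊤) := by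
    rw [ENat.tendsto_nhds_top_iff_natCast_lt]
    intro n
    filter_upwards [eventually_gt_atTop n] with a ha
    exact_mod_cast ha
  have : Tendsto (fun n : ℕ => f (n : ℕ∞)) atTop (𝓝 p) := by
    rw [← hftop]
    exact (hfc.tendsto ⊤).comp hcoe
  exact ⟨fun n => f (n : ℕ∞), hmem, this⟩
end

section
/- Every L-selective T1 space is an α₁-space: for every x ∈ X and every countable family {A_n : n ∈ ω} of sequences converging to x, there is a single sequence A converging to x such that A_n ∖ A is finite for every n. -/
open Topology Filter Set

/-- `X` is an `α₁`-space: for every point `x` and every countable family of sequences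
converging to `x`, there is a single sequence converging to `x` which almost contains
each of them. -/
def Alpha1 (X : Type*) [TopologicalSpace X] : Prop :=
  ∀ (x : X) (A : ℕ → ℕ → X), (∀ n, Tendsto (A n) atTop (𝓝 x)) →
    ∃ a : ℕ → X, Tendsto a atTop (𝓝 x) ∧ ∀ n, (Set.range (A n) \ Set.range a).Finite

/-- Openness criterion in `ℕ∞`: every natural point is isolated, and a set containing `⊤`
is open as soon as it contains a tail of the naturals. -/
lemma enat_isOpen {s : Set ℕ∞}
    (hs : ⊤ ∈ s → ∃ N : ℕ, ∀ n : ℕ, N ≤ n → (n : ℕ∞) ∈ s) : IsOpen s := by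
  rw [isOpen_iff_mem_nhds]
  intro y hy
  rcases eq_or_ne y ⊤ with rfl | hne
  · obtain ⟨N, hN⟩ := hs hy
    have hsub : Ioi ((N : ℕ∞)) ⊆ s := by
      intro z hz
      rcases eq_or_ne z ⊤ with rfl | hz'
      · exact hy
      · lift z to ℕ using hz'
        have hz2 : (N : ℕ∞) < (z : ℕ∞) := Set.mem_Ioi.mp hz
        exact hN z (le_of_lt (by exact_mod_cast hz2))
    exact Filter.mem_of_superset (Ioi_mem_nhds (WithTop.coe_lt_top N)) hsub
  · rw [ENat.mem_nhds_iff hne]; exact hy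

/-- The natural inclusion `ℕ → ℕ∞` tends to `⊤`. -/
lemma enat_tendsto_coe : Tendsto (fun n : ℕ => (n : ℕ∞)) atTop (𝓝 ⊤) := by
  rw [ENat.tendsto_nhds_top_iff_natCast_lt]
  intro n
  filter_upwards [Filter.eventually_gt_atTop n] with a ha
  exact_mod_cast ha

lemma nat_pair_tendsto (j : ℕ) : Tendsto (fun i => Nat.pair j i) atTop atTop :=
  tendsto_atTop_mono (fun i => Nat.right_le_pair j i) tendsto_id

/-- Every L-selective T1 space is an `α₁`-space. -/
theorem stmt_8 {X : Type*} [TopologicalSpace X] [T1Space X]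
    (h : Selective ℕ∞ X) : Alpha1 X := by
  classical
  intro x A hA
  -- the set of indices where `A k` differs from `x`
  set P : ℕ → ℕ → Prop := fun k m => A k m ≠ x with hP
  by_cases hG : ∀ k, (setOf (P k)).Finite
  · -- trivial case: all sequences are almost constantly `x`
    refine ⟨fun _ => x, tendsto_const_nhds, fun n => ?_⟩
    refine Set.Finite.subset ((hG n).image (A n)) ?_
    rintro y ⟨⟨m, rfl⟩, hy⟩
    refine ⟨m, ?_, rfl⟩
    intro hxm
    exact hy ⟨0, hxm.symm⟩
  · push_neg at hG
    obtain ⟨k₀, hk₀⟩ := hG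
    have hk₀inf : (setOf (P k₀)).Infinite := hk₀
    -- replace each sequence by a subsequence avoiding `x` (with a fallback)
    set D : ℕ → ℕ → X := fun k =>
      if hk : (setOf (P k)).Infinite then fun i => A k (Nat.nth (P k) i)
      else fun i => A k₀ (Nat.nth (P k₀) i) with hD
    have hDx : ∀ k i, D k i ≠ x := by
      intro k i
      simp only [hD]
      split_ifs with hk
      · exact Nat.nth_mem_of_infinite hk i
      · exact Nat.nth_mem_of_infinite hk₀inf i
    have hDt : ∀ k, Tendsto (D k) atTop (𝓝 x) := by
      intro k
      simp only [hD]
      split_ifs with hk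
      · exact (hA k).comp
          (tendsto_atTop_mono (fun i => (Nat.nth_strictMono hk).le_apply) tendsto_id)
      · exact (hA k₀).comp
          (tendsto_atTop_mono (fun i => (Nat.nth_strictMono hk₀inf).le_apply) tendsto_id)
    -- the finite "triangle plus spike" sets
    set T : ℕ → Set X := fun j => (fun k => D k (j + 1)) '' (Set.Iic j) with hT
    set F : ℕ → ℕ → Set X := fun j i => insert (D (j + 1) i) (T j) with hF
    set φ : ℕ∞ → Set X :=
      fun y => WithTop.recTopCoe {x} (fun n => F (Nat.unpair n).1 (Nat.unpair n).2) y with hφ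
    have hφtop : φ ⊤ = {x} := rfl
    have hφcoe : ∀ n : ℕ, φ (n : ℕ∞) = F (Nat.unpair n).1 (Nat.unpair n).2 := fun n => rfl
    have hTfin : ∀ j, (T j).Finite := fun j => (Set.finite_Iic j).image _
    have hFfin : ∀ j i, (F j i).Finite := fun j i => ((hTfin j).insert _)
    have hne : ∀ y, (φ y).Nonempty := by
      intro y
      induction y using WithTop.recTopCoe with
      | top => exact ⟨x, rfl⟩
      | coe n => exact ⟨_, Set.mem_insert _ _⟩
    have hcl : ∀ y, IsClosed (φ y) := by
      intro y
      induction y using WithTop.recTopCoe with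
      | top => exact isClosed_singleton
      | coe n => exact (hFfin _ _).isClosed
    have hlsc : IsLSC φ := by
      intro U hU
      apply enat_isOpen
      intro htop
      have hxU : x ∈ U := by
        obtain ⟨z, hz1, hz2⟩ := htop
        rw [hφtop] at hz1
        rwa [Set.mem_singleton_iff.mp hz1] at hz2
      have hUx : U ∈ 𝓝 x := hU.mem_nhds hxU
      obtain ⟨N₀, hN₀⟩ := Filter.eventually_atTop.mp ((hDt 0).eventually_mem hUx)
      have hM : ∀ j : ℕ, ∃ Mj : ℕ, ∀ i : ℕ, Mj ≤ i → D (j + 1) i ∈ U := by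
        intro j
        exact Filter.eventually_atTop.mp ((hDt (j + 1)).eventually_mem hUx)
      choose M hMs using hM
      -- the set of misses is finite
      have hmiss : {n : ℕ | ¬ ((φ (n : ℕ∞)) ∩ U).Nonempty}.Finite := by
        have hsub : {n : ℕ | ¬ ((φ (n : ℕ∞)) ∩ U).Nonempty} ⊆
            (fun p : ℕ × ℕ => Nat.pair p.1 p.2) ''
              ((Set.Iio N₀) ×ˢ (Set.Iio ((Finset.range N₀).sup M))) := by
          intro n hn
          simp only [Set.mem_setOf_eq] at hn
          set j := (Nat.unpair n).1 with hj
          set i := (Nat.unpair n).2 with hi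
          have hjN : j < N₀ := by
            by_contra hge
            push_neg at hge
            apply hn
            refine ⟨D 0 (j + 1), ?_, hN₀ (j + 1) (by omega)⟩
            rw [hφcoe]
            exact Set.mem_insert_of_mem _ ⟨0, by simp, rfl⟩
          have hiM : i < M j := by
            by_contra hge
            push_neg at hge
            apply hn
            refine ⟨D (j + 1) i, ?_, hMs j i hge⟩
            rw [hφcoe]
            exact Set.mem_insert _ _
          refine ⟨(j, i), ⟨hjN, lt_of_lt_of_le hiM ?_⟩, ?_⟩
          · exact Finset.le_sup (Finset.mem_range.mpr hjN)
          · exact Nat.pair_unpair n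
        exact Set.Finite.subset (((Set.finite_Iio _).prod (Set.finite_Iio _)).image _) hsub
      obtain ⟨b, hb⟩ := hmiss.bddAbove
      refine ⟨b + 1, fun n hn => ?_⟩
      by_contra hcon
      exact absurd (hb hcon) (by omega)
    -- apply selectivity
    obtain ⟨f, hfc, hfm⟩ := h φ hne hcl hlsc
    have hftop : f ⊤ = x := by
      have := hfm ⊤
      rw [hφtop] at this
      exact this
    set c : ℕ → X := fun n => f (n : ℕ∞) with hc
    have hct : Tendsto c atTop (𝓝 x) := by
      have h1 : Tendsto f (𝓝 ⊤) (𝓝 x) := hftop ▸ hfc.tendsto ⊤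
      exact h1.comp enat_tendsto_coe
    have hcm : ∀ j i, c (Nat.pair j i) ∈ F j i := by
      intro j i
      have := hfm ((Nat.pair j i : ℕ) : ℕ∞)
      rw [hφcoe, Nat.unpair_pair] at this
      exact this
    -- spike forcing: eventually the selection takes the spike value
    have hspike : ∀ j, ∃ I : ℕ, ∀ i, I ≤ i → c (Nat.pair j i) = D (j + 1) i := by
      intro j
      by_contra hcon
      push_neg at hcon
      have hBsub : ∀ I : ℕ, ∃ i, I ≤ i ∧ c (Nat.pair j i) ∈ T j := by
        intro I
        obtain ⟨i, hiI, hine⟩ := hcon I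
        refine ⟨i, hiI, ?_⟩
        rcases (Set.mem_insert_iff.mp (hcm j i)) with h1 | h2
        · exact absurd h1 hine
        · exact h2
      -- some value in the finite triangle is attained infinitely often
      have hfib : ∃ p ∈ T j, {i : ℕ | c (Nat.pair j i) = p}.Infinite := by
        by_contra hno
        push_neg at hno
        have hBfin : {i : ℕ | c (Nat.pair j i) ∈ T j}.Finite := by
          refine Set.Finite.subset ((hTfin j).biUnion
            (fun p hp => hno p hp)) ?_
          intro i hi
          exact Set.mem_biUnion hi rfl
        obtain ⟨b, hb⟩ := hBfin.bddAbove
        obtain ⟨i, hib, hi⟩ := hBsub (b + 1)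
        exact absurd (hb hi) (by omega)
      obtain ⟨p, hpT, hpinf⟩ := hfib
      obtain ⟨k, _, hpk⟩ := hpT
      have hpx : p ≠ x := hpk ▸ hDx k (j + 1)
      have hev : ∀ᶠ i in atTop, c (Nat.pair j i) ≠ p := by
        have hop : IsOpen ({p}ᶜ : Set X) := isOpen_compl_singleton
        have hmem : x ∈ ({p}ᶜ : Set X) := by
          simp only [Set.mem_compl_iff, Set.mem_singleton_iff]
          exact fun e => hpx e.symm
        have := (hct.comp (nat_pair_tendsto j)).eventually_mem (hop.mem_nhds hmem)
        simpa using this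
      obtain ⟨I, hI⟩ := Filter.eventually_atTop.mp hev
      apply hpinf
      refine Set.Finite.subset (Set.finite_Iio I) ?_
      intro i hi
      by_contra hge
      simp only [Set.mem_Iio, not_lt] at hge
      exact hI i hge hi
    choose I hIs using hspike
    -- assemble the single sequence
    set a : ℕ → X := fun n =>
      if n % 3 = 0 then x else if n % 3 = 1 then c (n / 3) else D 0 (n / 3) with ha
    have hax : a 0 = x := by simp [ha]
    have hac : ∀ m, c m = a (3 * m + 1) := by
      intro m
      have h1 : (3 * m + 1) % 3 = 1 := by omega
      have h2 : (3 * m + 1) / 3 = m := by omega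
      simp [ha, h1, h2]
    have had : ∀ m, D 0 m = a (3 * m + 2) := by
      intro m
      have h1 : (3 * m + 2) % 3 = 2 := by omega
      have h2 : (3 * m + 2) / 3 = m := by omega
      simp [ha, h1, h2]
    have hat : Tendsto a atTop (𝓝 x) := by
      intro s hs
      have hxs : x ∈ s := mem_of_mem_nhds hs
      obtain ⟨N₁, hN₁⟩ := Filter.eventually_atTop.mp (hct.eventually_mem hs)
      obtain ⟨N₂, hN₂⟩ := Filter.eventually_atTop.mp ((hDt 0).eventually_mem hs)
      rw [Filter.mem_map]
      refine Filter.mem_of_superset (Filter.mem_atTop (3 * (N₁ + N₂) + 3)) ?_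
      intro n hn
      have hn' : 3 * (N₁ + N₂) + 3 ≤ n := hn
      simp only [Set.mem_preimage]
      have hdiv1 : N₁ ≤ n / 3 := by omega
      have hdiv2 : N₂ ≤ n / 3 := by omega
      have h3 : n % 3 = 0 ∨ n % 3 = 1 ∨ n % 3 = 2 := by omega
      rcases h3 with h3 | h3 | h3
      · simpa [ha, h3] using hxs
      · simpa [ha, h3] using hN₁ (n / 3) hdiv1
      · simpa [ha, h3] using hN₂ (n / 3) hdiv2
    refine ⟨a, hat, fun n => ?_⟩
    by_cases hsn : (setOf (P n)).Finite
    · refine Set.Finite.subset (hsn.image (A n)) ?_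
      rintro y ⟨⟨m, rfl⟩, hy⟩
      refine ⟨m, ?_, rfl⟩
      intro hxm
      exact hy ⟨0, by rw [hax, ← hxm]⟩
    · have hsninf : (setOf (P n)).Infinite := hsn
      have hDn : ∀ i, D n i = A n (Nat.nth (P n) i) := by
        intro i
        simp only [hD, dif_pos hsninf]
      -- coverage
      refine Set.Finite.subset ((Set.finite_Iio (I (n - 1))).image (D n)) ?_
      rintro y ⟨⟨m, rfl⟩, hy⟩
      by_cases hxm : A n m = x
      · exact absurd ⟨0, by rw [hax, ← hxm]⟩ hy
      · have hmem : m ∈ setOf (P n) := hxm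
        have : m ∈ Set.range (Nat.nth (P n)) := by
          rw [Nat.range_nth_of_infinite hsninf]
          exact hmem
        obtain ⟨i, hi⟩ := this
        have hyD : A n m = D n i := by rw [hDn, hi]
        cases n with
        | zero =>
          exact absurd ⟨3 * i + 2, by rw [← had, ← hyD]⟩ hy
        | succ j =>
          by_cases hiI : I j ≤ i
          · have : A (j + 1) m = c (Nat.pair j i) := by rw [hyD, hIs j i hiI]
            exact absurd ⟨3 * (Nat.pair j i) + 1, by rw [← hac, ← this]⟩ hy
          · push_neg at hiI
            refine ⟨i, ?_, hyD.symm⟩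
            simpa using hiI
end

section
/- The sequential fan S_ω is not L-selective. -/
open Topology Filter Set

/-- The sequential fan `S_ω`: the point `none` is the unique limit point, the points
`some (n, m)` are isolated, and a basic neighborhood of `none` is determined by a
function `f : ℕ → ℕ`, containing `some (n, m)` for all `n` and all `m ≥ f n`. -/
def SeqFan : Type := Option (ℕ × ℕ)

instance : TopologicalSpace SeqFan :=
  TopologicalSpace.generateFrom
    ({U | ∃ p : ℕ × ℕ, U = {some p}} ∪
     {U | ∃ f : ℕ → ℕ, U = insert none {z : SeqFan | ∃ n m, f n ≤ m ∧ z = some (n, m)}})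

namespace SeqFanAux

/-- Basic fan neighborhood of the limit point, determined by `g`. -/
def Ug (g : ℕ → ℕ) : Set SeqFan :=
  insert none {z : SeqFan | ∃ n m, g n ≤ m ∧ z = some (n, m)}

lemma isOpen_Ug (g : ℕ → ℕ) : IsOpen (Ug g) :=
  TopologicalSpace.GenerateOpen.basic _ (Or.inr ⟨g, rfl⟩)

lemma isOpen_single (p : ℕ × ℕ) : IsOpen ({some p} : Set SeqFan) :=
  TopologicalSpace.GenerateOpen.basic _ (Or.inl ⟨p, rfl⟩)

lemma seqfan_cases (z : SeqFan) : z = none ∨ ∃ p : ℕ × ℕ, z = some p :=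
  Option.casesOn z (Or.inl rfl) fun p => Or.inr ⟨p, rfl⟩

lemma exists_Ug_subset {U : Set SeqFan} (hU : IsOpen U) (hn : (none : SeqFan) ∈ U) :
    ∃ g : ℕ → ℕ, Ug g ⊆ U := by
  have h : TopologicalSpace.GenerateOpen
      ({U | ∃ p : ℕ × ℕ, U = {some p}} ∪
       {U | ∃ f : ℕ → ℕ, U = insert none {z : SeqFan | ∃ n m, f n ≤ m ∧ z = some (n, m)}}) U := hU
  clear hU
  induction h with
  | basic u hu =>
      rcases hu with ⟨p, rfl⟩ | ⟨f, rfl⟩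
      · exact absurd (mem_singleton_iff.1 hn) (fun h => Option.some_ne_none _ h.symm)
      · exact ⟨f, subset_rfl⟩
  | univ => exact ⟨fun _ => 0, fun _ _ => trivial⟩
  | inter u v hu hv ihu ihv =>
      obtain ⟨g₁, h₁⟩ := ihu hn.1
      obtain ⟨g₂, h₂⟩ := ihv hn.2
      refine ⟨fun n => max (g₁ n) (g₂ n), fun z hz => ?_⟩
      rcases hz with rfl | ⟨n, m, hm, rfl⟩
      · exact ⟨h₁ (mem_insert _ _), h₂ (mem_insert _ _)⟩
      · exact ⟨h₁ (Or.inr ⟨n, m, (le_max_left _ _).trans hm, rfl⟩),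
          h₂ (Or.inr ⟨n, m, (le_max_right _ _).trans hm, rfl⟩)⟩
  | sUnion s hs ih =>
      obtain ⟨u, hu, hnu⟩ := hn
      obtain ⟨g, hg⟩ := ih u hu hnu
      exact ⟨g, hg.trans (subset_sUnion_of_mem hu)⟩

/-- The value of the l.s.c. map at `k`, where `k` codes the pair `(i, j)`:
the "low part" sits at height `i` on columns `< i`, the "tail" at height `j`
on columns `≥ i`. -/
def Fk (k : ℕ) : Set SeqFan :=
  {z | ∃ n : ℕ, (n < k.unpair.1 ∧ z = some (n, k.unpair.1)) ∨
      (k.unpair.1 ≤ n ∧ z = some (n, k.unpair.2))}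

lemma notMem_Fk_none (k : ℕ) : (none : SeqFan) ∉ Fk k := by
  rintro ⟨n, (⟨-, h⟩ | ⟨-, h⟩)⟩ <;> exact Option.some_ne_none _ h.symm

lemma isClosed_Fk (k : ℕ) : IsClosed (Fk k) := by
  rw [← isOpen_compl_iff]
  have hcompl : (Fk k)ᶜ = Ug (fun _ => max k.unpair.1 k.unpair.2 + 1) ∪
      ⋃ p ∈ {p : ℕ × ℕ | some p ∉ Fk k}, ({some p} : Set SeqFan) := by
    ext z
    constructor
    · intro hz
      rcases seqfan_cases z with rfl | ⟨p, rfl⟩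
      · exact Or.inl (mem_insert _ _)
      · exact Or.inr (mem_biUnion hz rfl)
    · rintro (hz | hz)
      · rcases hz with rfl | ⟨n, m, hm, rfl⟩
        · exact notMem_Fk_none k
        · have hm2 : max k.unpair.1 k.unpair.2 + 1 ≤ m := hm
          rintro ⟨n', (⟨-, h⟩ | ⟨-, h⟩)⟩ <;>
          · have h' := Option.some.inj h
            have h2 : m = (Prod.mk n' _).2 := congrArg Prod.snd h'
            simp only at h2
            omega
      · simp only [mem_iUnion, mem_setOf_eq] at hz
        obtain ⟨p, hp, rfl⟩ := hz
        exact hp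
  rw [hcompl]
  exact (isOpen_Ug _).union (isOpen_biUnion fun p _ => isOpen_single p)

/-- The l.s.c. closed-valued map witnessing non-selectivity. -/
def phi : ℕ∞ → Set SeqFan := ENat.recTopCoe {none} Fk

@[simp] lemma phi_top : phi ⊤ = {none} := rfl

@[simp] lemma phi_coe (k : ℕ) : phi (k : ℕ∞) = Fk k := rfl

lemma phi_nonempty : ∀ y : ℕ∞, (phi y).Nonempty := by
  intro y
  induction y using ENat.recTopCoe with
  | top => exact ⟨none, rfl⟩
  | coe k => exact ⟨some (k.unpair.1, k.unpair.2), k.unpair.1, Or.inr ⟨le_rfl, rfl⟩⟩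

lemma phi_closed : ∀ y : ℕ∞, IsClosed (phi y) := by
  intro y
  induction y using ENat.recTopCoe with
  | top =>
      rw [phi_top, ← isOpen_compl_iff]
      have : ({(none : SeqFan)}ᶜ : Set SeqFan) = ⋃ p : ℕ × ℕ, {some p} := by
        ext z
        constructor
        · intro hz
          rcases seqfan_cases z with rfl | ⟨p, rfl⟩
          · exact absurd rfl hz
          · exact mem_iUnion.2 ⟨p, rfl⟩
        · intro hz
          obtain ⟨p, hp⟩ := mem_iUnion.1 hz
          change z = some p at hp
          subst hp
          exact fun h => Option.some_ne_none p h
      rw [this]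
      exact isOpen_iUnion fun p => isOpen_single p
  | coe k => exact isClosed_Fk k

lemma isOpen_no_top (S : Set ℕ∞) (h : ⊤ ∉ S) : IsOpen S := by
  rw [← Set.biUnion_of_singleton S]
  exact isOpen_biUnion fun x hx => ENat.isOpen_singleton (fun ht => h (ht ▸ hx))

lemma pair_le_pair {a b c d : ℕ} (h1 : a ≤ c) (h2 : b ≤ d) :
    Nat.pair a b ≤ Nat.pair c d := by
  unfold Nat.pair
  split <;> split <;> rename_i hab hcd <;> nlinarith [Nat.mul_le_mul h1 h1, Nat.mul_le_mul h2 h2]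

lemma lsc_phi : IsLSC phi := by
  intro U hU
  by_cases hn : (none : SeqFan) ∈ U
  · obtain ⟨g, hg⟩ := exists_Ug_subset hU hn
    set M := (Finset.range (g 0 + 1)).sup g with hM
    set T := Nat.pair (g 0) M with hT
    have hit : ∀ k : ℕ, T < k → ((Fk k) ∩ U).Nonempty := by
      intro k hk
      by_cases h1 : g 0 ≤ k.unpair.1 ∧ 1 ≤ k.unpair.1
      · exact ⟨some (0, k.unpair.1), ⟨0, Or.inl ⟨h1.2, rfl⟩⟩,
          hg (Or.inr ⟨0, k.unpair.1, h1.1, rfl⟩)⟩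
      · have hi : k.unpair.1 ≤ g 0 := by
          rcases not_and_or.1 h1 with h | h
          · omega
          · omega
        by_cases h2 : g k.unpair.1 ≤ k.unpair.2
        · exact ⟨some (k.unpair.1, k.unpair.2), ⟨k.unpair.1, Or.inr ⟨le_rfl, rfl⟩⟩,
            hg (Or.inr ⟨k.unpair.1, k.unpair.2, h2, rfl⟩)⟩
        · exfalso
          have hgiM : g k.unpair.1 ≤ M :=
            Finset.le_sup (Finset.mem_range.2 (by omega))
          have hj : k.unpair.2 ≤ M := by omega
          have hkT : k ≤ T := by
            calc k = Nat.pair k.unpair.1 k.unpair.2 := (Nat.pair_unpair k).symm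
            _ ≤ T := pair_le_pair hi hj
          omega
    have hS : {y : ℕ∞ | (phi y ∩ U).Nonempty} =
        Ioi (T : ℕ∞) ∪ {y : ℕ∞ | (phi y ∩ U).Nonempty ∧ y ≠ ⊤} := by
      ext y
      constructor
      · intro hy
        rcases eq_or_ne y ⊤ with rfl | hne
        · exact Or.inl (ENat.coe_lt_top T)
        · exact Or.inr ⟨hy, hne⟩
      · rintro (hy | hy)
        · rcases eq_or_ne y ⊤ with rfl | hne
          · exact ⟨none, rfl, hn⟩
          · obtain ⟨k, rfl⟩ := WithTop.ne_top_iff_exists.1 hne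
            have hTk : T < k := ENat.coe_lt_coe.1 hy
            exact hit k hTk
        · exact hy.1
    rw [hS]
    exact isOpen_Ioi.union (isOpen_no_top _ (fun h => h.2 rfl))
  · apply isOpen_no_top
    rintro ⟨z, hz1, hz2⟩
    rw [phi_top] at hz1
    change z = none at hz1
    subst hz1
    exact hn hz2

end SeqFanAux

open SeqFanAux in
/-- The sequential fan is not L-selective. -/
theorem stmt_9 : ¬ Selective ℕ∞ SeqFan := by
  intro hsel
  obtain ⟨f, hfc, hfs⟩ := hsel phi phi_nonempty phi_closed lsc_phi
  have hftop : f ⊤ = none := by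
    have := hfs ⊤
    rw [phi_top] at this
    exact this
  have Hcv : ∀ g : ℕ → ℕ, ∃ N : ℕ, ∀ k : ℕ, N ≤ k → f (k : ℕ∞) ∈ Ug g := by
    intro g
    have t : Tendsto f (𝓝 ⊤) (𝓝 (none : SeqFan)) := hftop ▸ hfc.tendsto ⊤
    have hmem : f ⁻¹' (Ug g) ∈ 𝓝 (⊤ : ℕ∞) :=
      t ((isOpen_Ug g).mem_nhds (mem_insert _ _))
    obtain ⟨a, ha, hsub⟩ := (nhds_top_basis.mem_iff).1 hmem
    obtain ⟨n, rfl⟩ := WithTop.ne_top_iff_exists.1 ha.ne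
    refine ⟨n + 1, fun k hk => hsub (mem_Ioi.2 ?_)⟩
    exact ENat.coe_lt_coe.2 (show n < k by omega)
  by_cases hB : ∀ i : ℕ, ∃ j n : ℕ, i ≤ n ∧ f ((Nat.pair i j : ℕ) : ℕ∞) = (some (n, j) : SeqFan)
  · -- every "generation" has a tail pick: diagonalize against the chosen heights
    choose jj nn hle heq using hB
    obtain ⟨N, hN⟩ := Hcv (fun n => (Finset.range (n + 1)).sup jj + 1)
    have hk := hN (Nat.pair N (jj N)) (Nat.left_le_pair N (jj N))
    rw [heq N] at hk
    rcases hk with h | ⟨n, m, hm, h⟩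
    · exact Option.some_ne_none _ h
    · have h' := Option.some.inj h
      have hn1 : nn N = n := congrArg Prod.fst h'
      have hn2 : jj N = m := congrArg Prod.snd h'
      have hsup : jj N ≤ (Finset.range (nn N + 1)).sup jj :=
        Finset.le_sup (Finset.mem_range.2 (Nat.lt_succ_of_le (hle N)))
      rw [hn1] at hsup
      have hm2 : (Finset.range (n + 1)).sup jj + 1 ≤ m := hm
      omega
  · -- some generation has only low picks: its height is constant, contradiction
    obtain ⟨i₀, hB0⟩ := not_forall.1 hB
    obtain ⟨N, hN⟩ := Hcv (fun _ => i₀ + 1)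
    have hmem := hfs ((Nat.pair i₀ N : ℕ) : ℕ∞)
    rw [phi_coe] at hmem
    obtain ⟨n, hd⟩ := hmem
    rw [Nat.unpair_pair] at hd
    rcases hd with ⟨hlt, heq⟩ | ⟨hge, heq⟩
    · have hk := hN (Nat.pair i₀ N) (Nat.right_le_pair i₀ N)
      rw [heq] at hk
      rcases hk with h | ⟨n', m', hm', h⟩
      · exact Option.some_ne_none _ h
      · have h' := Option.some.inj h
        have h2 : i₀ = m' := congrArg Prod.snd h'
        have hm2 : i₀ + 1 ≤ m' := hm'
        omega
    · exact hB0 ⟨N, n, hge, heq⟩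
end

section
/- Arens' space S₂ is an α₁-space but is not L-selective. -/
open Topology Filter Set

/-- Arens' space `S₂`: `none` is the point `x`, `some (Sum.inl n)` is the point `x_n`,
and `some (Sum.inr (n, m))` is the isolated point `x_{n,m}`. -/
def Arens : Type := Option (ℕ ⊕ (ℕ × ℕ))

instance : TopologicalSpace Arens :=
  TopologicalSpace.generateFrom
    ({U | ∃ p : ℕ × ℕ, U = {some (Sum.inr p)}} ∪
     {U | ∃ n k : ℕ, U = insert (some (Sum.inl n))
        {z : Arens | ∃ m, k ≤ m ∧ z = some (Sum.inr (n, m))}} ∪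
     {U | ∃ (N : ℕ) (f : ℕ → ℕ), U = insert none
        ({z : Arens | ∃ n, N ≤ n ∧ z = some (Sum.inl n)} ∪
         {z : Arens | ∃ n m, N ≤ n ∧ f n ≤ m ∧ z = some (Sum.inr (n, m))})})

namespace ArensAux

def col (n k : ℕ) : Set Arens :=
  insert (some (Sum.inl n)) {z : Arens | ∃ m, k ≤ m ∧ z = some (Sum.inr (n, m))}

def bas (N : ℕ) (f : ℕ → ℕ) : Set Arens :=
  insert none
    ({z : Arens | ∃ n, N ≤ n ∧ z = some (Sum.inl n)} ∪
     {z : Arens | ∃ n m, N ≤ n ∧ f n ≤ m ∧ z = some (Sum.inr (n, m))})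

lemma isOpen_pt (p : ℕ × ℕ) : IsOpen ({some (Sum.inr p)} : Set Arens) :=
  TopologicalSpace.GenerateOpen.basic _ (Or.inl (Or.inl ⟨p, rfl⟩))

lemma isOpen_col (n k : ℕ) : IsOpen (col n k) :=
  TopologicalSpace.GenerateOpen.basic _ (Or.inl (Or.inr ⟨n, k, rfl⟩))

lemma isOpen_bas (N : ℕ) (f : ℕ → ℕ) : IsOpen (bas N f) :=
  TopologicalSpace.GenerateOpen.basic _ (Or.inr ⟨N, f, rfl⟩)

lemma none_mem_bas (N f) : (none : Arens) ∈ bas N f := Or.inl rfl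

lemma inl_mem_bas {N n : ℕ} {f} (h : N ≤ n) : (some (Sum.inl n) : Arens) ∈ bas N f :=
  Or.inr (Or.inl ⟨n, h, rfl⟩)

lemma inr_mem_bas {N n m : ℕ} {f} (h : N ≤ n) (h2 : f n ≤ m) :
    (some (Sum.inr (n, m)) : Arens) ∈ bas N f :=
  Or.inr (Or.inr ⟨n, m, h, h2, rfl⟩)

lemma inl_mem_col (n k : ℕ) : (some (Sum.inl n) : Arens) ∈ col n k := Or.inl rfl

lemma inr_mem_col {n k m : ℕ} (h : k ≤ m) : (some (Sum.inr (n, m)) : Arens) ∈ col n k :=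
  Or.inr ⟨m, h, rfl⟩

lemma bas_mono {N₁ N₂ : ℕ} {f₁ f₂ : ℕ → ℕ} (hN : N₁ ≤ N₂) (hf : ∀ n, f₁ n ≤ f₂ n) :
    bas N₂ f₂ ⊆ bas N₁ f₁ := by
  rintro z (rfl | (⟨n, hn, rfl⟩ | ⟨n, m, hn, hm, rfl⟩))
  · exact none_mem_bas _ _
  · exact inl_mem_bas (hN.trans hn)
  · exact inr_mem_bas (hN.trans hn) ((hf n).trans hm)

lemma col_mono {n k₁ k₂ : ℕ} (hk : k₁ ≤ k₂) : col n k₂ ⊆ col n k₁ := by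
  rintro z (rfl | ⟨m, hm, rfl⟩)
  · exact inl_mem_col _ _
  · exact inr_mem_col (hk.trans hm)

lemma exists_bas_subset {U : Set Arens} (hU : IsOpen U) :
    (none : Arens) ∈ U → ∃ N f, bas N f ⊆ U := by
  induction hU with
  | basic s hs =>
    rcases hs with ((⟨p, rfl⟩ | ⟨n, k, rfl⟩) | ⟨N, f, rfl⟩)
    · rintro h; exact nomatch h
    · rintro (h | ⟨m, _, h⟩) <;> simp at h
    · exact fun _ => ⟨N, f, subset_rfl⟩
  | univ => exact fun _ => ⟨0, fun _ => 0, subset_univ _⟩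
  | inter s t _ _ ihs iht =>
    rintro ⟨h1, h2⟩
    obtain ⟨N₁, f₁, hs⟩ := ihs h1
    obtain ⟨N₂, f₂, ht⟩ := iht h2
    exact ⟨max N₁ N₂, fun n => max (f₁ n) (f₂ n),
      subset_inter ((bas_mono (le_max_left _ _) fun n => le_max_left _ _).trans hs)
        ((bas_mono (le_max_right _ _) fun n => le_max_right _ _).trans ht)⟩
  | sUnion S _ ih =>
    rintro ⟨s, hsS, hns⟩
    obtain ⟨N, f, h⟩ := ih s hsS hns
    exact ⟨N, f, h.trans (subset_sUnion_of_mem hsS)⟩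

lemma exists_col_subset {U : Set Arens} (hU : IsOpen U) :
    ∀ n, (some (Sum.inl n) : Arens) ∈ U → ∃ k, col n k ⊆ U := by
  induction hU with
  | basic s hs =>
    intro n
    rcases hs with ((⟨p, rfl⟩ | ⟨n', k, rfl⟩) | ⟨N, f, rfl⟩)
    · rintro h; exact nomatch h
    · rintro (h | ⟨m, _, h⟩)
      · obtain rfl : n = n' := by injection h with h'; injection h'
        exact ⟨k, subset_rfl⟩
      · exact nomatch h
    · rintro (h | h)
      · simp at h
      rcases h with ⟨n', hn', h⟩ | ⟨n', m', _, _, h⟩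
      · obtain rfl : n = n' := by injection h with h'; injection h'
        refine ⟨f n, ?_⟩
        rintro z (rfl | ⟨m, hm, rfl⟩)
        · exact inl_mem_bas hn'
        · exact inr_mem_bas hn' hm
      · exact nomatch h
  | univ => exact fun n _ => ⟨0, subset_univ _⟩
  | inter s t _ _ ihs iht =>
    rintro n ⟨h1, h2⟩
    obtain ⟨k₁, hs⟩ := ihs n h1
    obtain ⟨k₂, ht⟩ := iht n h2
    exact ⟨max k₁ k₂, subset_inter ((col_mono (le_max_left _ _)).trans hs)
      ((col_mono (le_max_right _ _)).trans ht)⟩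
  | sUnion S _ ih =>
    rintro n ⟨s, hsS, hns⟩
    obtain ⟨k, h⟩ := ih s hsS n hns
    exact ⟨k, h.trans (subset_sUnion_of_mem hsS)⟩

end ArensAux
namespace ArensAux

lemma eventually_mem_of_tendsto {A : ℕ → Arens} {x : Arens} {O : Set Arens}
    (hA : Tendsto A atTop (𝓝 x)) (hO : IsOpen O) (hx : x ∈ O) :
    ∀ᶠ i in atTop, A i ∈ O :=
  hA (hO.mem_nhds hx)

lemma range_diff_finite {B : ℕ → Arens} {S : Set Arens} (h : ∀ᶠ i in atTop, B i ∈ S) :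
    (Set.range B \ S).Finite := by
  rw [← Nat.cofinite_eq_atTop, eventually_cofinite] at h
  refine (h.image B).subset ?_
  rintro y ⟨⟨i, rfl⟩, hy⟩
  exact ⟨i, hy, rfl⟩

/-- the m-coordinate extractor -/
def sel : Arens → ℕ
  | some (Sum.inr q) => q.2
  | _ => 0

lemma eventually_not_isolated {A : ℕ → Arens} (hA : Tendsto A atTop (𝓝 none)) :
    ∀ᶠ i in atTop, ∀ p : ℕ × ℕ, A i ≠ some (Sum.inr p) := by
  have hcol : ∀ n, {i | ∃ m, A i = some (Sum.inr (n, m))}.Finite := by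
    intro n
    have h1 : ∀ᶠ i in atTop, A i ∈ bas (n + 1) fun _ => 0 :=
      eventually_mem_of_tendsto hA (isOpen_bas _ _) (none_mem_bas _ _)
    rw [← Nat.cofinite_eq_atTop, eventually_cofinite] at h1
    refine h1.subset ?_
    rintro i ⟨m, hm⟩ hmem
    rw [hm] at hmem
    rcases hmem with h | (⟨n', _, h⟩ | ⟨n', m', hn', _, h⟩)
    · exact nomatch h
    · exact nomatch h
    · obtain rfl : n = n' := by
        injection h with h'; injection h' with h''; exact congrArg Prod.fst h''
      omega
  have hM : ∀ n, {m | ∃ i, A i = some (Sum.inr (n, m))}.Finite := by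
    intro n
    refine (((hcol n).image fun i => sel (A i))).subset ?_
    rintro m ⟨i, hi⟩
    exact ⟨i, ⟨m, hi⟩, by show sel (A i) = m; rw [hi]; rfl⟩
  have hbd : ∀ n, ∃ b, ∀ m, (∃ i, A i = some (Sum.inr (n, m))) → m < b := by
    intro n
    obtain ⟨b, hb⟩ := (hM n).bddAbove
    exact ⟨b + 1, fun m hm => Nat.lt_succ_of_le (hb hm)⟩
  choose f hf using hbd
  have h2 : ∀ᶠ i in atTop, A i ∈ bas 0 f :=
    eventually_mem_of_tendsto hA (isOpen_bas _ _) (none_mem_bas _ _)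
  filter_upwards [h2] with i hi
  rintro ⟨n, m⟩ heq
  rw [heq] at hi
  rcases hi with h | (⟨n', _, h⟩ | ⟨n', m', _, hm', h⟩)
  · exact nomatch h
  · exact nomatch h
  · obtain ⟨rfl, rfl⟩ : n = n' ∧ m = m' := by
      injection h with h'; injection h' with h''
      exact ⟨congrArg Prod.fst h'', congrArg Prod.snd h''⟩
    exact absurd (hf n m ⟨i, heq⟩) (not_lt.mpr hm')

lemma alpha1 : Alpha1 Arens := by
  rintro (_ | xx) A hA
  · -- x = none
    refine ⟨fun i => if Even i then some (Sum.inl (i / 2)) else none, ?_, ?_⟩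
    · refine tendsto_nhds.mpr ?_
      intro U hU hmem
      obtain ⟨N, f, hbf⟩ := exists_bas_subset hU hmem
      filter_upwards [eventually_ge_atTop (2 * N)] with i hi
      by_cases he : Even i
      · simp only [Set.mem_preimage]
        refine (congrArg (· ∈ U) (if_pos he)).mpr ?_
        exact hbf (inl_mem_bas (by omega))
      · simp only [Set.mem_preimage]
        refine (congrArg (· ∈ U) (if_neg he)).mpr ?_
        exact hbf (none_mem_bas _ _)
    · intro j
      have h1 := eventually_not_isolated (hA j)
      refine (range_diff_finite (S := {z : Arens | ∀ p, z ≠ some (Sum.inr p)}) h1).subset ?_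
      refine diff_subset_diff_right ?_
      rintro (_ | (n | p)) hz
      · exact ⟨1, by show (if Even 1 then _ else _) = _; exact if_neg (by decide)⟩
      · exact ⟨2 * n, by show (if Even (2 * n) then _ else _) = _; exact (if_pos (even_two_mul n)).trans (congrArg (fun k => some (Sum.inl k)) (Nat.mul_div_cancel_left n (by norm_num)))⟩
      · exact absurd rfl (hz p)
  rcases xx with n | p
  · -- x = some (inl n)
    refine ⟨fun i => if Even i then some (Sum.inr (n, i / 2)) else some (Sum.inl n), ?_, ?_⟩
    · refine tendsto_nhds.mpr ?_
      intro U hU hmem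
      obtain ⟨k, hck⟩ := exists_col_subset hU n hmem
      filter_upwards [eventually_ge_atTop (2 * k)] with i hi
      by_cases he : Even i
      · simp only [Set.mem_preimage]
        refine (congrArg (· ∈ U) (if_pos he)).mpr ?_
        exact hck (inr_mem_col (by omega))
      · simp only [Set.mem_preimage]
        refine (congrArg (· ∈ U) (if_neg he)).mpr ?_
        exact hck (inl_mem_col _ _)
    · intro j
      have h1 : ∀ᶠ i in atTop, A j i ∈ col n 0 :=
        eventually_mem_of_tendsto (hA j) (isOpen_col n 0) (inl_mem_col n 0)
      refine (range_diff_finite h1).subset (diff_subset_diff_right ?_)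
      rintro z (rfl | ⟨m, _, rfl⟩)
      · exact ⟨1, by show (if Even 1 then _ else _) = _; exact if_neg (by decide)⟩
      · exact ⟨2 * m, by show (if Even (2 * m) then _ else _) = _; exact (if_pos (even_two_mul m)).trans (congrArg (fun k => some (Sum.inr (n, k))) (Nat.mul_div_cancel_left m (by norm_num)))⟩
  · -- x isolated
    refine ⟨fun _ => some (Sum.inr p), tendsto_const_nhds, fun j => ?_⟩
    have h1 : ∀ᶠ i in atTop, A j i ∈ ({some (Sum.inr p)} : Set Arens) :=
      eventually_mem_of_tendsto (hA j) (isOpen_pt p) rfl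
    refine (range_diff_finite h1).subset (diff_subset_diff_right ?_)
    rintro z rfl
    exact ⟨0, rfl⟩

end ArensAux
namespace ArensAux

def row (n : ℕ) : Set Arens := {z | ∃ k, z = some (Sum.inr (k, n))}

lemma isClosed_row (n : ℕ) : IsClosed (row n) := by
  rw [← isOpen_compl_iff, isOpen_iff_forall_mem_open]
  rintro (_ | (k | ⟨k, m⟩)) hz
  · refine ⟨bas 0 fun _ => n + 1, ?_, isOpen_bas _ _, none_mem_bas _ _⟩
    rintro z (rfl | (⟨k, _, rfl⟩ | ⟨k, m, _, hm, rfl⟩)) ⟨k', hk'⟩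
    · exact nomatch hk'
    · exact nomatch hk'
    · have hm' : n + 1 ≤ m := hm
      obtain rfl : m = n := by
        injection hk' with h'; injection h' with h''; exact congrArg Prod.snd h''
      omega
  · refine ⟨col k (n + 1), ?_, isOpen_col _ _, inl_mem_col _ _⟩
    rintro z (rfl | ⟨m, hm, rfl⟩) ⟨k', hk'⟩
    · exact nomatch hk'
    · obtain rfl : m = n := by
        injection hk' with h'; injection h' with h''; exact congrArg Prod.snd h''
      omega
  · refine ⟨{some (Sum.inr (k, m))}, ?_, isOpen_pt _, rfl⟩
    rintro z rfl ⟨k', hk'⟩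
    obtain ⟨rfl, rfl⟩ : k = k' ∧ m = n := by
      injection hk' with h'; injection h' with h''
      exact ⟨congrArg Prod.fst h'', congrArg Prod.snd h''⟩
    exact hz ⟨k, rfl⟩

lemma isClosed_none : IsClosed ({none} : Set Arens) := by
  rw [← isOpen_compl_iff, isOpen_iff_forall_mem_open]
  rintro (_ | (k | p)) hz
  · exact absurd rfl hz
  · refine ⟨col k 0, ?_, isOpen_col _ _, inl_mem_col _ _⟩
    rintro z (rfl | ⟨m, _, rfl⟩) h <;> exact nomatch h
  · refine ⟨{some (Sum.inr p)}, ?_, isOpen_pt _, rfl⟩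
    rintro z rfl h
    exact nomatch h

lemma isOpen_enat_of_not_top {S : Set ℕ∞} (h : ⊤ ∉ S) : IsOpen S := by
  have : S = ⋃ (n : ℕ) (_ : (n : ℕ∞) ∈ S), {(n : ℕ∞)} := by
    ext x
    constructor
    · intro hx
      lift x to ℕ using fun ht => h (ht ▸ hx)
      exact mem_iUnion₂.mpr ⟨x, hx, rfl⟩
    · intro hx
      obtain ⟨n, hn, hx⟩ := mem_iUnion₂.mp hx
      exact hx ▸ hn
  rw [this]
  exact isOpen_iUnion fun n => isOpen_iUnion fun hn => ENat.isOpen_singleton (ENat.coe_ne_top n)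

lemma tendsto_coe_enat : Tendsto ((↑) : ℕ → ℕ∞) atTop (𝓝 ⊤) := by
  rw [ENat.tendsto_nhds_top_iff_natCast_lt]
  intro n
  filter_upwards [eventually_gt_atTop n] with m hm
  exact_mod_cast hm

noncomputable def phi : ℕ∞ → Set Arens := fun y =>
  if y = ⊤ then {none} else row y.toNat

lemma phi_coe (n : ℕ) : phi (n : ℕ∞) = row n := by
  rw [phi, if_neg (ENat.coe_ne_top n)]
  simp

lemma not_selective : ¬ Selective ℕ∞ Arens := by
  intro hsel
  obtain ⟨f, hf, hmem⟩ := hsel phi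
    (by
      intro y
      by_cases hy : y = ⊤
      · rw [hy]; simp only [phi, if_pos rfl]; exact ⟨none, rfl⟩
      · rw [phi, if_neg hy]; exact ⟨some (Sum.inr (0, y.toNat)), 0, rfl⟩)
    (by
      intro y
      by_cases hy : y = ⊤
      · rw [hy]; simp only [phi, if_pos rfl]; exact isClosed_none
      · rw [phi, if_neg hy]; exact isClosed_row _)
    (by
      intro U hU
      by_cases htop : (phi ⊤ ∩ U).Nonempty
      · -- none ∈ U
        have hnU : (none : Arens) ∈ U := by
          obtain ⟨z, hz1, hz2⟩ := htop
          simp only [phi, if_pos rfl, mem_singleton_iff] at hz1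
          exact hz1 ▸ hz2
        obtain ⟨N, g, hbg⟩ := exists_bas_subset hU hnU
        have hS : {y | (phi y ∩ U).Nonempty} =
            Ioi ((g N : ℕ∞)) ∪ ({y | (phi y ∩ U).Nonempty} \ {⊤}) := by
          apply Subset.antisymm
          · intro y hy
            by_cases hy' : y = ⊤
            · subst hy'
              exact Or.inl (mem_Ioi.mpr (lt_top_iff_ne_top.mpr (ENat.coe_ne_top (g N))))
            · exact Or.inr ⟨hy, hy'⟩
          · rintro y (hy | ⟨hy, _⟩)
            · by_cases hy' : y = ⊤
              · subst hy'; exact htop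
              · lift y to ℕ using hy'
                rw [mem_setOf_eq, phi_coe]
                refine ⟨some (Sum.inr (N, y)), ⟨N, rfl⟩, hbg (inr_mem_bas le_rfl ?_)⟩
                rw [mem_Ioi] at hy
                exact_mod_cast hy.le
            · exact hy
        rw [hS]
        exact (isOpen_Ioi).union (isOpen_enat_of_not_top (by simp))
      · exact isOpen_enat_of_not_top htop)
  have hftop : f ⊤ = none := by
    have := hmem ⊤
    simp only [phi, if_pos rfl, mem_singleton_iff] at this
    exact this
  have hA : Tendsto (fun n : ℕ => f (n : ℕ∞)) atTop (𝓝 (none : Arens)) := by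
    rw [← hftop]
    exact (hf.tendsto ⊤).comp tendsto_coe_enat
  obtain ⟨i, hi⟩ := (eventually_not_isolated hA).exists
  have := hmem (i : ℕ∞)
  rw [phi_coe] at this
  obtain ⟨k, hk⟩ := this
  exact hi (k, i) hk

end ArensAux

/-- Arens' space is an `α₁`-space but is not L-selective. -/
theorem stmt_10 : Alpha1 Arens ∧ ¬ Selective ℕ∞ Arens :=
  ⟨ArensAux.alpha1, ArensAux.not_selective⟩
end

section
/- Every W-space is strongly C-selective: if X is a W-space, then for every countable regular space C and every lower semicontinuous mapping φ from C to the nonempty subsets of X, φ has a continuous selection. -/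
open Topology Filter Set

/-- `X` is a `W`-space: at every point, player I has a winning strategy in the `W`-game,
i.e. a way of choosing open neighborhoods in response to the points already chosen by
player II so that the sequence of points chosen by player II necessarily converges. -/
def WSpace (X : Type*) [TopologicalSpace X] : Prop :=
  ∀ x : X, ∃ σ : List X → Set X, (∀ l, IsOpen (σ l) ∧ x ∈ σ l) ∧
    ∀ u : ℕ → X, (∀ n, u n ∈ σ (List.ofFn fun i : Fin n => u i)) →
      Tendsto u atTop (𝓝 x)

set_option linter.unusedSectionVars false

theorem exists_clopen_nbhd {C : Type*} [TopologicalSpace C] [Countable C] [T3Space C]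
    {A : Set C} {c : C} (hA : IsOpen A) (hc : c ∈ A) :
    ∃ Q : Set C, IsClopen Q ∧ c ∈ Q ∧ Q ⊆ A := by
  classical
  have : Nonempty C := ⟨c⟩
  have reg : ∀ (x : C) (B : Set C), IsOpen B → x ∈ B →
      ∃ W, IsOpen W ∧ x ∈ W ∧ closure W ⊆ B := by
    intro x B hB hx
    rcases exists_mem_nhds_isClosed_subset (hB.mem_nhds hx) with ⟨t, ht, htc, hts⟩
    exact ⟨interior t, isOpen_interior, mem_interior_iff_mem_nhds.2 ht,
      (closure_minimal interior_subset htc).trans hts⟩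
  obtain ⟨d, hd⟩ := exists_surjective_nat C
  set pickW : C → Set C → Set C := fun x B =>
    if h : ∃ W, IsOpen W ∧ x ∈ W ∧ closure W ⊆ B then h.choose else ∅ with hpickWdef
  have hpickW : ∀ x B, IsOpen B → x ∈ B →
      IsOpen (pickW x B) ∧ x ∈ pickW x B ∧ closure (pickW x B) ⊆ B := by
    intro x B hB hx
    have h : ∃ W, IsOpen W ∧ x ∈ W ∧ closure W ⊆ B := reg x B hB hx
    simpa [hpickWdef, h] using h.choose_spec
  set step : ℕ → Set C × Set C → Set C × Set C := fun n p =>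
    if d n ∈ A ∧ d n ∉ closure p.2 then (p.1 ∪ pickW (d n) (A ∩ (closure p.2)ᶜ), p.2)
    else (p.1, p.2 ∪ pickW (d n) ((closure p.1)ᶜ)) with hstep
  set g : ℕ → Set C × Set C := fun n => Nat.rec (pickW c A, ∅) step n with hg
  have hg0 : g 0 = (pickW c A, ∅) := rfl
  have hgs : ∀ n, g (n+1) = step n (g n) := fun n => rfl
  -- invariant
  have inv : ∀ n, IsOpen (g n).1 ∧ IsOpen (g n).2 ∧ closure (g n).1 ⊆ A ∧
      Disjoint (closure (g n).1) (closure (g n).2) ∧ c ∈ (g n).1 := by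
    intro n
    induction n with
    | zero =>
      obtain ⟨h1, h2, h3⟩ := hpickW c A hA hc
      simp only [hg0]
      exact ⟨h1, isOpen_empty, h3, by simp, h2⟩
    | succ n ih =>
      obtain ⟨hU, hV, hUA, hdis, hcU⟩ := ih
      rw [hgs]
      by_cases hcase : d n ∈ A ∧ d n ∉ closure (g n).2
      · have hBopen : IsOpen (A ∩ (closure (g n).2)ᶜ) := hA.inter (isClosed_closure).isOpen_compl
        have hBmem : d n ∈ A ∩ (closure (g n).2)ᶜ := ⟨hcase.1, hcase.2⟩
        obtain ⟨hW1, hW2, hW3⟩ := hpickW (d n) _ hBopen hBmem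
        rw [hstep]
        simp only [if_pos hcase]
        refine ⟨hU.union hW1, hV, ?_, ?_, Or.inl hcU⟩
        · rw [closure_union]
          exact union_subset hUA (hW3.trans inter_subset_left)
        · rw [closure_union]
          refine disjoint_union_left.2 ⟨hdis, ?_⟩
          refine disjoint_left.2 fun x hx hx2 => ?_
          exact (hW3 hx).2 hx2
      · have hdn : d n ∉ closure (g n).1 := by
          intro hmem
          rcases not_and_or.1 hcase with h1 | h2
          · exact h1 (hUA hmem)
          · exact (disjoint_left.1 hdis hmem) (not_not.1 h2)
        have hBopen : IsOpen ((closure (g n).1)ᶜ) := (isClosed_closure).isOpen_compl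
        obtain ⟨hW1, hW2, hW3⟩ := hpickW (d n) _ hBopen hdn
        rw [hstep]
        simp only [if_neg hcase]
        refine ⟨hU, hV.union hW1, hUA, ?_, hcU⟩
        rw [closure_union]
        refine disjoint_union_right.2 ⟨hdis, ?_⟩
        refine disjoint_left.2 fun x hx hx2 => ?_
        exact (hW3 hx2) hx
  -- monotonicity
  have mono1 : ∀ n, (g n).1 ⊆ (g (n+1)).1 := by
    intro n
    rw [hgs, hstep]
    by_cases hcase : d n ∈ A ∧ d n ∉ closure (g n).2
    · simp only [if_pos hcase]; exact subset_union_left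
    · simp only [if_neg hcase]; exact subset_rfl
  have mono2 : ∀ n, (g n).2 ⊆ (g (n+1)).2 := by
    intro n
    rw [hgs, hstep]
    by_cases hcase : d n ∈ A ∧ d n ∉ closure (g n).2
    · simp only [if_pos hcase]; exact subset_rfl
    · simp only [if_neg hcase]; exact subset_union_left
  have mono1' : ∀ {m n}, m ≤ n → (g m).1 ⊆ (g n).1 := by
    intro m n h
    induction h with
    | refl => exact subset_rfl
    | step h ih => exact ih.trans (mono1 _)
  have mono2' : ∀ {m n}, m ≤ n → (g m).2 ⊆ (g n).2 := by
    intro m n h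
    induction h with
    | refl => exact subset_rfl
    | step h ih => exact ih.trans (mono2 _)
  -- coverage
  have hcov : ∀ n, d n ∈ (g (n+1)).1 ∪ (g (n+1)).2 := by
    intro n
    rw [hgs, hstep]
    by_cases hcase : d n ∈ A ∧ d n ∉ closure (g n).2
    · have hBopen : IsOpen (A ∩ (closure (g n).2)ᶜ) := hA.inter (isClosed_closure).isOpen_compl
      obtain ⟨_, hW2, _⟩ := hpickW (d n) _ hBopen ⟨hcase.1, hcase.2⟩
      simp only [if_pos hcase]
      exact Or.inl (Or.inr hW2)
    · obtain ⟨hU, hV, hUA, hdis, hcU⟩ := inv n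
      have hdn : d n ∉ closure (g n).1 := by
        intro hmem
        rcases not_and_or.1 hcase with h1 | h2
        · exact h1 (hUA hmem)
        · exact (disjoint_left.1 hdis hmem) (not_not.1 h2)
      obtain ⟨_, hW2, _⟩ := hpickW (d n) _ (isClosed_closure).isOpen_compl hdn
      simp only [if_neg hcase]
      exact Or.inr (Or.inr hW2)
  refine ⟨⋃ n, (g n).1, ⟨?_, isOpen_iUnion fun n => (inv n).1⟩, mem_iUnion.2 ⟨0, (inv 0).2.2.2.2⟩,
    iUnion_subset fun n => subset_closure.trans (inv n).2.2.1⟩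
  -- closed: complement is union of the second parts
  have hcompl : (⋃ n, (g n).1)ᶜ = ⋃ n, (g n).2 := by
    apply Subset.antisymm
    · intro x hx
      obtain ⟨n, rfl⟩ := hd x
      rcases hcov n with h | h
      · exact absurd (mem_iUnion.2 ⟨n+1, h⟩) hx
      · exact mem_iUnion.2 ⟨n+1, h⟩
    · intro x hx hx2
      obtain ⟨n, hn⟩ := mem_iUnion.1 hx
      obtain ⟨m, hm⟩ := mem_iUnion.1 hx2
      have h1 : x ∈ (g (max m n)).1 := mono1' (le_max_left m n) hm
      have h2 : x ∈ (g (max m n)).2 := mono2' (le_max_right m n) hn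
      exact disjoint_left.1 (inv (max m n)).2.2.2.1 (subset_closure h1) (subset_closure h2)
  rw [← isOpen_compl_iff, hcompl]
  exact isOpen_iUnion fun n => (inv n).2.1

theorem trace_base {X : Type*} [TopologicalSpace X] (σ : X → List X → Set X)
    (hσm : ∀ x l, x ∈ σ x l)
    (hσw : ∀ x (u : ℕ → X), (∀ n, u n ∈ σ x (List.ofFn fun i : Fin n => u i)) →
      Tendsto u atTop (𝓝 x))
    (Z : Set X) (z : X) (U : Set X) (hU : IsOpen U) (hzU : z ∈ U) :
    ∃ l : List X, (∀ a ∈ l, a ∈ Z) ∧ σ z l ∩ Z ⊆ U := by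
  classical
  by_contra H
  push_neg at H
  set w : List X → X := fun l => if h : ∃ y, y ∈ σ z l ∩ Z ∧ y ∉ U then h.choose else z with hwdef
  set v : ℕ → List X := fun n => Nat.rec [] (fun _ l => l ++ [w l]) n with hvdef
  have hv0 : v 0 = [] := rfl
  have hvs : ∀ n, v (n+1) = v n ++ [w (v n)] := fun n => rfl
  have key : ∀ n, (∀ a ∈ v n, a ∈ Z) ∧ (w (v n) ∈ σ z (v n) ∩ Z ∧ w (v n) ∉ U) := by
    intro n
    induction n with
    | zero =>
      have hz0 : ∀ a ∈ v 0, a ∈ Z := by simp [hv0]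
      obtain ⟨y, hy, hyU⟩ := Set.not_subset.1 (H (v 0) hz0)
      have hex : ∃ y, y ∈ σ z (v 0) ∩ Z ∧ y ∉ U := ⟨y, hy, hyU⟩
      refine ⟨hz0, ?_⟩
      rw [hwdef]; simp only [dif_pos hex]
      exact hex.choose_spec
    | succ n ih =>
      have hmem : ∀ a ∈ v (n+1), a ∈ Z := by
        rw [hvs]
        intro a ha
        rcases List.mem_append.1 ha with h | h
        · exact ih.1 a h
        · simp only [List.mem_singleton] at h
          exact h ▸ ih.2.1.2
      obtain ⟨y, hy, hyU⟩ := Set.not_subset.1 (H (v (n+1)) hmem)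
      have hex : ∃ y, y ∈ σ z (v (n+1)) ∩ Z ∧ y ∉ U := ⟨y, hy, hyU⟩
      refine ⟨hmem, ?_⟩
      rw [hwdef]; simp only [dif_pos hex]
      exact hex.choose_spec
  have hvu : ∀ n, v n = List.ofFn (fun i : Fin n => w (v i)) := by
    intro n
    induction n with
    | zero => simp [hv0]
    | succ n ih =>
      rw [hvs, List.ofFn_succ', List.concat_eq_append]
      congr 1
  have legal : ∀ n, (fun n => w (v n)) n ∈ σ z (List.ofFn fun i : Fin n => (fun n => w (v n)) i) := by
    intro n
    show w (v n) ∈ σ z (List.ofFn fun i : Fin n => w (v i))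
    rw [← hvu n]
    exact (key n).2.1.1
  have htend := hσw z (fun n => w (v n)) legal
  have hev : ∀ᶠ n in atTop, w (v n) ∈ U := htend (hU.mem_nhds hzU)
  rcases hev.exists with ⟨n, hn⟩
  exact (key n).2.2 hn


structure MRec (C X : Type*) where
  pt : C
  val : X
  tgt : Set X
  E : ℕ → Set C
  st : ℕ

structure MCtx (C X : Type*) where
  psi : C → Set X
  V : X → ℕ → Set X
  clop : C → Set C → Set C
  pick : C → Set X → X
  e : ℕ → C

namespace MCtx

variable {C X : Type*} [TopologicalSpace C] [TopologicalSpace X]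

structure OK (κ : MCtx C X) : Prop where
  ψo : IsLSC κ.psi
  ψne : ∀ c, (κ.psi c).Nonempty
  Vo : ∀ z k, IsOpen (κ.V z k)
  Vm : ∀ z k, z ∈ κ.V z k
  Va : ∀ z ⦃j k : ℕ⦄, j ≤ k → κ.V z k ⊆ κ.V z j
  hclop : ∀ c A, IsOpen A → c ∈ A → IsClopen (κ.clop c A) ∧ c ∈ κ.clop c A ∧ κ.clop c A ⊆ A
  pick1 : ∀ c T, κ.pick c T ∈ κ.psi c
  pick2 : ∀ c T, (κ.psi c ∩ T).Nonempty → κ.pick c T ∈ T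

structure REK (κ : MCtx C X) (r : MRec C X) : Prop where
  Ecl : ∀ j, IsClopen (r.E j)
  Ept : ∀ j, r.pt ∈ r.E j
  Emono : ∀ j, r.E (j+1) ⊆ r.E j
  Ezone : ∀ j, r.E j ⊆ {c | (κ.psi c ∩ r.tgt ∩ κ.V r.val j).Nonempty}
  To : IsOpen r.tgt
  vψ : r.val ∈ κ.psi r.pt
  vT : r.val ∈ r.tgt

theorem REK.Ele {κ : MCtx C X} {r : MRec C X} (h : REK κ r) :
    ∀ {i j : ℕ}, i ≤ j → r.E j ⊆ r.E i := by
  intro i j hij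
  induction hij with
  | refl => exact subset_rfl
  | step h2 ih => exact (h.Emono _).trans ih

variable (κ : MCtx C X)

open Classical in
noncomputable def mch (L : List (MRec C X)) (n : ℕ) : List (MRec C X) :=
  L.filter fun r => decide (κ.e n ∈ r.E 0)

open Classical in
noncomputable def mpr (L : List (MRec C X)) (n : ℕ) : Option (MRec C X) :=
  (κ.mch L n).argmax MRec.st

open Classical in
noncomputable def mlvl (rp : MRec C X) (n : ℕ) : ℕ :=
  Nat.findGreatest (fun j => κ.e n ∈ rp.E j) n

open Classical in
noncomputable def mT (L : List (MRec C X)) (n : ℕ) : Set X :=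
  (κ.mpr L n).elim Set.univ (fun rp => rp.tgt ∩ κ.V rp.val (κ.mlvl rp n))

open Classical in
noncomputable def mEpar (L : List (MRec C X)) (n : ℕ) : Set C :=
  (κ.mpr L n).elim Set.univ
    (fun rp => rp.E (κ.mlvl rp n) \ (if κ.mlvl rp n < n then rp.E (κ.mlvl rp n + 1) else ∅))

noncomputable def mx (L : List (MRec C X)) (n : ℕ) : X := κ.pick (κ.e n) (κ.mT L n)

noncomputable def mzone (L : List (MRec C X)) (n : ℕ) (j : ℕ) : Set C :=
  {c' | (κ.psi c' ∩ (κ.mT L n ∩ κ.V (κ.mx L n) j)).Nonempty}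

open Classical in
noncomputable def mA (L : List (MRec C X)) (n : ℕ) : Set C :=
  (κ.mzone L n 0 ∩ (⋂ r ∈ κ.mch L n, r.E 0) ∩ κ.mEpar L n) \
    ((⋃ r ∈ L.filter fun r => decide (κ.e n ∉ r.E 0), r.E 0) ∪ {p | ∃ r ∈ L, r.pt = p})

noncomputable def mEseq (c : C) (zone : ℕ → Set C) (Q : Set C) : ℕ → Set C
  | 0 => Q
  | j+1 => κ.clop c (mEseq c zone Q j ∩ zone (j+1))

noncomputable def mStep (L : List (MRec C X)) (n : ℕ) : MRec C X :=
  ⟨κ.e n, κ.mx L n, κ.mT L n,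
   κ.mEseq (κ.e n) (κ.mzone L n) (κ.clop (κ.e n) (κ.mA L n)), n⟩

open Classical in
noncomputable def mBuild : ℕ → List (MRec C X)
  | 0 => []
  | n+1 => mBuild n ++
      (if ∃ r ∈ mBuild n, r.pt = κ.e n then [] else [κ.mStep (mBuild n) n])

/-! basic facts -/

theorem mem_mch {κ : MCtx C X} {L : List (MRec C X)} {n : ℕ} {r : MRec C X} :
    r ∈ κ.mch L n ↔ r ∈ L ∧ κ.e n ∈ r.E 0 := by
  classical
  simp [mch, List.mem_filter]

theorem mpr_spec {κ : MCtx C X} {L : List (MRec C X)} {n : ℕ}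
    (hex : ∃ r' ∈ L, κ.e n ∈ r'.E 0) :
    ∃ rp, κ.mpr L n = some rp ∧ rp ∈ L ∧ κ.e n ∈ rp.E 0 ∧
      ∀ r' ∈ L, κ.e n ∈ r'.E 0 → r'.st ≤ rp.st := by
  classical
  obtain ⟨r', hr', hr'E⟩ := hex
  have hne : κ.mch L n ≠ [] := by
    intro h
    have : r' ∈ κ.mch L n := mem_mch.2 ⟨hr', hr'E⟩
    rw [h] at this
    exact List.not_mem_nil this
  rcases ho : κ.mpr L n with _ | rp
  · exact absurd (List.argmax_eq_none.1 ho) hne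
  · have hmem : rp ∈ κ.mch L n := List.argmax_mem ho
    refine ⟨rp, rfl, (mem_mch.1 hmem).1, (mem_mch.1 hmem).2, ?_⟩
    intro r'' hr'' hr''E
    exact List.le_of_mem_argmax (mem_mch.2 ⟨hr'', hr''E⟩) ho

theorem mlvl_mem {κ : MCtx C X} {rp : MRec C X} {n : ℕ} (h : κ.e n ∈ rp.E 0) :
    κ.e n ∈ rp.E (κ.mlvl rp n) := by
  classical
  unfold mlvl
  exact Nat.findGreatest_spec (P := fun j => κ.e n ∈ rp.E j) (Nat.zero_le n) h

theorem mlvl_le {κ : MCtx C X} (rp : MRec C X) (n : ℕ) : κ.mlvl rp n ≤ n := by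
  classical
  unfold mlvl
  exact Nat.findGreatest_le n

theorem mlvl_ge {κ : MCtx C X} {rp : MRec C X} {n k : ℕ} (hk : k ≤ n) (h : κ.e n ∈ rp.E k) :
    k ≤ κ.mlvl rp n := by
  classical
  unfold mlvl
  exact Nat.le_findGreatest hk h

theorem mlvl_not_mem {κ : MCtx C X} {rp : MRec C X} {n : ℕ} (h : κ.mlvl rp n < n) :
    κ.e n ∉ rp.E (κ.mlvl rp n + 1) := by
  classical
  unfold mlvl at h ⊢
  exact Nat.findGreatest_is_greatest (P := fun j => κ.e n ∈ rp.E j)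
    (Nat.lt_succ_self _) (Nat.succ_le_of_lt h)

theorem mT_none {κ : MCtx C X} {L : List (MRec C X)} {n : ℕ} (ho : κ.mpr L n = none) :
    κ.mT L n = Set.univ := by
  simp [mT, ho]

theorem mT_some {κ : MCtx C X} {L : List (MRec C X)} {n : ℕ} {rp : MRec C X}
    (ho : κ.mpr L n = some rp) :
    κ.mT L n = rp.tgt ∩ κ.V rp.val (κ.mlvl rp n) := by
  simp [mT, ho]

theorem mEpar_none {κ : MCtx C X} {L : List (MRec C X)} {n : ℕ} (ho : κ.mpr L n = none) :
    κ.mEpar L n = Set.univ := by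
  simp [mEpar, ho]

theorem mEpar_some {κ : MCtx C X} {L : List (MRec C X)} {n : ℕ} {rp : MRec C X}
    (ho : κ.mpr L n = some rp) :
    κ.mEpar L n =
      rp.E (κ.mlvl rp n) \ (if κ.mlvl rp n < n then rp.E (κ.mlvl rp n + 1) else ∅) := by
  simp only [mEpar, ho, Option.elim]

theorem mT_spec {κ : MCtx C X} (hκ : κ.OK) {L : List (MRec C X)} {n : ℕ}
    (hL : ∀ r ∈ L, κ.REK r) :
    IsOpen (κ.mT L n) ∧ (κ.psi (κ.e n) ∩ κ.mT L n).Nonempty := by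
  classical
  rcases ho : κ.mpr L n with _ | rp
  · rw [mT_none ho]
    simpa using hκ.ψne (κ.e n)
  · have hmem : rp ∈ κ.mch L n := List.argmax_mem ho
    obtain ⟨hrpL, hrpE⟩ := mem_mch.1 hmem
    have hrek := hL rp hrpL
    rw [mT_some ho]
    constructor
    · exact hrek.To.inter (hκ.Vo _ _)
    · have h2 := hrek.Ezone (κ.mlvl rp n) (mlvl_mem hrpE)
      simp only [Set.mem_setOf_eq] at h2
      rwa [Set.inter_assoc] at h2

theorem mx_spec {κ : MCtx C X} (hκ : κ.OK) {L : List (MRec C X)} {n : ℕ}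
    (hL : ∀ r ∈ L, κ.REK r) :
    κ.mx L n ∈ κ.psi (κ.e n) ∩ κ.mT L n :=
  ⟨hκ.pick1 (κ.e n) (κ.mT L n), hκ.pick2 (κ.e n) (κ.mT L n) (mT_spec hκ hL).2⟩

theorem mzone_open {κ : MCtx C X} (hκ : κ.OK) {L : List (MRec C X)} {n : ℕ}
    (hL : ∀ r ∈ L, κ.REK r) (j : ℕ) : IsOpen (κ.mzone L n j) :=
  hκ.ψo _ ((mT_spec hκ hL).1.inter (hκ.Vo _ _))

theorem mzone_mem {κ : MCtx C X} (hκ : κ.OK) {L : List (MRec C X)} {n : ℕ}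
    (hL : ∀ r ∈ L, κ.REK r) (j : ℕ) : κ.e n ∈ κ.mzone L n j := by
  obtain ⟨h1, h2⟩ := mx_spec hκ hL
  exact ⟨κ.mx L n, h1, h2, hκ.Vm _ _⟩

theorem mEpar_spec {κ : MCtx C X} (hκ : κ.OK) {L : List (MRec C X)} {n : ℕ}
    (hL : ∀ r ∈ L, κ.REK r) :
    IsOpen (κ.mEpar L n) ∧ κ.e n ∈ κ.mEpar L n := by
  classical
  rcases ho : κ.mpr L n with _ | rp
  · rw [mEpar_none ho]; simp
  · have hmem : rp ∈ κ.mch L n := List.argmax_mem ho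
    obtain ⟨hrpL, hrpE⟩ := mem_mch.1 hmem
    have hrek := hL rp hrpL
    rw [mEpar_some ho]
    constructor
    · apply IsOpen.sdiff ((hrek.Ecl _).isOpen)
      split
      · exact (hrek.Ecl _).isClosed
      · exact isClosed_empty
    · refine ⟨mlvl_mem hrpE, ?_⟩
      split
      · next h => exact mlvl_not_mem h
      · simp


theorem mA_spec {κ : MCtx C X} [T1Space C] (hκ : κ.OK) {L : List (MRec C X)} {n : ℕ}
    (hL : ∀ r ∈ L, κ.REK r) (hnh : ¬ ∃ r ∈ L, r.pt = κ.e n) :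
    IsOpen (κ.mA L n) ∧ κ.e n ∈ κ.mA L n := by
  classical
  have h1 : IsOpen (κ.mzone L n 0) := mzone_open hκ hL 0
  have h2 : IsOpen (⋂ r ∈ κ.mch L n, r.E 0) :=
    (List.finite_toSet _).isOpen_biInter (fun r hr => ((hL r (mem_mch.1 hr).1).Ecl 0).isOpen)
  have h3 : IsOpen (κ.mEpar L n) := (mEpar_spec hκ hL).1
  have h4 : IsClosed (⋃ r ∈ L.filter fun r => decide (κ.e n ∉ r.E 0), r.E 0) := by
    apply (List.finite_toSet _).isClosed_biUnion
    intro r hr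
    exact ((hL r (List.mem_filter.1 hr).1).Ecl 0).isClosed
  have h5 : IsClosed {p | ∃ r ∈ L, r.pt = p} := by
    have heq : {p | ∃ r ∈ L, r.pt = p} = MRec.pt '' {r | r ∈ L} := by
      ext p
      simp [Set.mem_image]
    rw [heq]
    exact ((List.finite_toSet L).image MRec.pt).isClosed
  constructor
  · exact IsOpen.sdiff ((h1.inter h2).inter h3) (h4.union h5)
  · refine ⟨⟨⟨mzone_mem hκ hL 0, ?_⟩, (mEpar_spec hκ hL).2⟩, ?_⟩
    · exact Set.mem_iInter₂.2 fun r hr => (mem_mch.1 hr).2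
    · rintro (hmem | hmem)
      · obtain ⟨r, hr, hmem⟩ := Set.mem_iUnion₂.1 hmem
        exact of_decide_eq_true (List.mem_filter.1 hr).2 hmem
      · exact hnh hmem

theorem mA_subset_zone0 {κ : MCtx C X} (L : List (MRec C X)) (n : ℕ) :
    κ.mA L n ⊆ κ.mzone L n 0 :=
  fun _ h => h.1.1.1

theorem mStep_E {κ : MCtx C X} (L : List (MRec C X)) (n : ℕ) :
    (κ.mStep L n).E = κ.mEseq (κ.e n) (κ.mzone L n) (κ.clop (κ.e n) (κ.mA L n)) := rfl

theorem mEseq_spec {κ : MCtx C X} [T1Space C] (hκ : κ.OK) {L : List (MRec C X)} {n : ℕ}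
    (hL : ∀ r ∈ L, κ.REK r) (hnh : ¬ ∃ r ∈ L, r.pt = κ.e n) :
    ∀ j, IsClopen ((κ.mStep L n).E j) ∧ κ.e n ∈ (κ.mStep L n).E j ∧
      (κ.mStep L n).E j ⊆ κ.mzone L n j := by
  have hA := mA_spec hκ hL hnh
  intro j
  induction j with
  | zero =>
    obtain ⟨hc1, hc2, hc3⟩ := hκ.hclop (κ.e n) (κ.mA L n) hA.1 hA.2
    exact ⟨hc1, hc2, hc3.trans (mA_subset_zone0 L n)⟩
  | succ j ih =>
    obtain ⟨hc1, hc2, hsub⟩ := ih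
    have hop : IsOpen ((κ.mStep L n).E j ∩ κ.mzone L n (j+1)) :=
      hc1.isOpen.inter (mzone_open hκ hL (j+1))
    have hmem : κ.e n ∈ (κ.mStep L n).E j ∩ κ.mzone L n (j+1) := ⟨hc2, mzone_mem hκ hL (j+1)⟩
    obtain ⟨hd1, hd2, hd3⟩ := hκ.hclop (κ.e n) _ hop hmem
    have hEj1 : (κ.mStep L n).E (j+1) =
        κ.clop (κ.e n) ((κ.mStep L n).E j ∩ κ.mzone L n (j+1)) := rfl
    rw [hEj1]
    exact ⟨hd1, hd2, fun c hc => (hd3 hc).2⟩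

theorem mEseq_mono {κ : MCtx C X} [T1Space C] (hκ : κ.OK) {L : List (MRec C X)} {n : ℕ}
    (hL : ∀ r ∈ L, κ.REK r) (hnh : ¬ ∃ r ∈ L, r.pt = κ.e n) :
    ∀ j, (κ.mStep L n).E (j+1) ⊆ (κ.mStep L n).E j := by
  intro j
  obtain ⟨hc1, hc2, _⟩ := mEseq_spec hκ hL hnh j
  have hop : IsOpen ((κ.mStep L n).E j ∩ κ.mzone L n (j+1)) :=
    hc1.isOpen.inter (mzone_open hκ hL (j+1))
  have hmem : κ.e n ∈ (κ.mStep L n).E j ∩ κ.mzone L n (j+1) := ⟨hc2, mzone_mem hκ hL (j+1)⟩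
  obtain ⟨_, _, hd3⟩ := hκ.hclop (κ.e n) _ hop hmem
  have hEj1 : (κ.mStep L n).E (j+1) =
      κ.clop (κ.e n) ((κ.mStep L n).E j ∩ κ.mzone L n (j+1)) := rfl
  rw [hEj1]
  exact fun c hc => (hd3 hc).1

theorem mStep_REK {κ : MCtx C X} [T1Space C] (hκ : κ.OK) {L : List (MRec C X)} {n : ℕ}
    (hL : ∀ r ∈ L, κ.REK r) (hnh : ¬ ∃ r ∈ L, r.pt = κ.e n) :
    κ.REK (κ.mStep L n) := by
  refine ⟨fun j => (mEseq_spec hκ hL hnh j).1, fun j => (mEseq_spec hκ hL hnh j).2.1,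
    mEseq_mono hκ hL hnh, ?_, (mT_spec hκ hL).1, (mx_spec hκ hL).1, (mx_spec hκ hL).2⟩
  intro j c hc
  have h2 := (mEseq_spec hκ hL hnh j).2.2 hc
  obtain ⟨y, hy⟩ := h2
  rw [← Set.inter_assoc] at hy
  exact ⟨y, hy⟩

theorem mStep_E0_subset_chain {κ : MCtx C X} [T1Space C] (hκ : κ.OK) {L : List (MRec C X)}
    {n : ℕ} (hL : ∀ r ∈ L, κ.REK r) (hnh : ¬ ∃ r ∈ L, r.pt = κ.e n) {r' : MRec C X}
    (hr' : r' ∈ L) (hE : κ.e n ∈ r'.E 0) : (κ.mStep L n).E 0 ⊆ r'.E 0 := by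
  have hA := mA_spec hκ hL hnh
  obtain ⟨_, _, hc3⟩ := hκ.hclop (κ.e n) (κ.mA L n) hA.1 hA.2
  refine hc3.trans ?_
  intro c hc
  have := hc.1.1.2
  exact Set.mem_iInter₂.1 this r' (mem_mch.2 ⟨hr', hE⟩)

theorem mStep_E0_disj {κ : MCtx C X} [T1Space C] (hκ : κ.OK) {L : List (MRec C X)}
    {n : ℕ} (hL : ∀ r ∈ L, κ.REK r) (hnh : ¬ ∃ r ∈ L, r.pt = κ.e n) {r' : MRec C X}
    (hr' : r' ∈ L) (hE : κ.e n ∉ r'.E 0) :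
    ∀ c' ∈ (κ.mStep L n).E 0, c' ∉ r'.E 0 := by
  classical
  have hA := mA_spec hκ hL hnh
  obtain ⟨_, _, hc3⟩ := hκ.hclop (κ.e n) (κ.mA L n) hA.1 hA.2
  intro c' hc' hmem
  refine (hc3 hc').2 (Or.inl ?_)
  refine Set.mem_iUnion₂.2 ⟨r', ?_, hmem⟩
  exact List.mem_filter.2 ⟨hr', decide_eq_true hE⟩

theorem mStep_E0_unhandled {κ : MCtx C X} [T1Space C] (hκ : κ.OK) {L : List (MRec C X)}
    {n : ℕ} (hL : ∀ r ∈ L, κ.REK r) (hnh : ¬ ∃ r ∈ L, r.pt = κ.e n) {p : C}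
    (hp : ∃ r' ∈ L, r'.pt = p) : p ∉ (κ.mStep L n).E 0 := by
  have hA := mA_spec hκ hL hnh
  obtain ⟨_, _, hc3⟩ := hκ.hclop (κ.e n) (κ.mA L n) hA.1 hA.2
  intro hc
  exact (hc3 hc).2 (Or.inr hp)

theorem mStep_parent {κ : MCtx C X} [T1Space C] (hκ : κ.OK) {L : List (MRec C X)}
    {n : ℕ} (hL : ∀ r ∈ L, κ.REK r) (hnh : ¬ ∃ r ∈ L, r.pt = κ.e n)
    (hex : ∃ r' ∈ L, κ.e n ∈ r'.E 0) :
    ∃ rp, rp ∈ L ∧ κ.e n ∈ rp.E 0 ∧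
      (∀ r' ∈ L, κ.e n ∈ r'.E 0 → r'.st ≤ rp.st) ∧
      (κ.mStep L n).tgt = rp.tgt ∩ κ.V rp.val (κ.mlvl rp n) ∧
      (κ.mStep L n).E 0 ⊆ rp.E (κ.mlvl rp n) ∧
      (κ.mlvl rp n < n → ∀ c' ∈ (κ.mStep L n).E 0, c' ∉ rp.E (κ.mlvl rp n + 1)) := by
  classical
  obtain ⟨rp, ho, hrpL, hrpE, hmax⟩ := mpr_spec hex
  have hA := mA_spec hκ hL hnh
  obtain ⟨_, _, hc3⟩ := hκ.hclop (κ.e n) (κ.mA L n) hA.1 hA.2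
  have hEpar : ∀ c' ∈ (κ.mStep L n).E 0, c' ∈ κ.mEpar L n := fun c' hc' => (hc3 hc').1.2
  refine ⟨rp, hrpL, hrpE, hmax, ?_, ?_, ?_⟩
  · show κ.mT L n = _
    exact mT_some ho
  · intro c' hc'
    have := hEpar c' hc'
    rw [mEpar_some ho] at this
    exact this.1
  · intro hlt c' hc' hmem
    have := hEpar c' hc'
    rw [mEpar_some ho] at this
    refine this.2 ?_
    rw [if_pos hlt]
    exact hmem

open Classical in
theorem mBuild_succ (κ : MCtx C X) (n : ℕ) :
    κ.mBuild (n+1) = κ.mBuild n ++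
      (if ∃ r ∈ κ.mBuild n, r.pt = κ.e n then [] else [κ.mStep (κ.mBuild n) n]) := rfl

open Classical in
theorem mem_mBuild {κ : MCtx C X} {n : ℕ} {r : MRec C X} :
    r ∈ κ.mBuild n ↔ ∃ t, t < n ∧ (¬ ∃ r' ∈ κ.mBuild t, r'.pt = κ.e t) ∧
      r = κ.mStep (κ.mBuild t) t := by
  classical
  induction n with
  | zero =>
    constructor
    · intro h; exact (List.not_mem_nil h).elim
    · rintro ⟨t, ht, _⟩; omega
  | succ n ih =>
    rw [mBuild_succ, List.mem_append]
    constructor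
    · rintro (h | h)
      · obtain ⟨t, ht, h2, h3⟩ := ih.1 h
        exact ⟨t, by omega, h2, h3⟩
      · by_cases hcase : ∃ r' ∈ κ.mBuild n, r'.pt = κ.e n
        · rw [if_pos hcase] at h
          exact (List.not_mem_nil h).elim
        · rw [if_neg hcase] at h
          simp only [List.mem_singleton] at h
          exact ⟨n, Nat.lt_succ_self n, hcase, h⟩
    · rintro ⟨t, ht, h2, h3⟩
      rcases Nat.lt_succ_iff_lt_or_eq.1 ht with ht' | rfl
      · exact Or.inl (ih.2 ⟨t, ht', h2, h3⟩)
      · right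
        rw [if_neg h2]
        simp [h3]

theorem mBuild_mono {κ : MCtx C X} {m n : ℕ} (h : m ≤ n) {r : MRec C X}
    (hr : r ∈ κ.mBuild m) : r ∈ κ.mBuild n := by
  induction h with
  | refl => exact hr
  | step h2 ih =>
    rw [mBuild_succ, List.mem_append]
    exact Or.inl ih

theorem mBuild_st {κ : MCtx C X} {n : ℕ} {r : MRec C X} (hr : r ∈ κ.mBuild n) :
    r.st < n ∧ r = κ.mStep (κ.mBuild r.st) r.st ∧
      (¬ ∃ r' ∈ κ.mBuild r.st, r'.pt = κ.e r.st) ∧ r.pt = κ.e r.st := by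
  obtain ⟨t, ht, h2, h3⟩ := mem_mBuild.1 hr
  have hst : r.st = t := by rw [h3]; rfl
  subst hst
  exact ⟨ht, h3, h2, by rw [h3]; rfl⟩

theorem mBuild_REK {κ : MCtx C X} [T1Space C] (hκ : κ.OK) :
    ∀ n, ∀ r ∈ κ.mBuild n, κ.REK r := by
  intro n
  induction n using Nat.strong_induction_on with
  | _ n IH =>
  intro r hr
  obtain ⟨t, ht, h2, h3⟩ := mem_mBuild.1 hr
  rw [h3]
  exact mStep_REK hκ (fun r' hr' => IH t ht r' hr') h2

end MCtx

open MCtx in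
theorem michael {C X : Type*} [TopologicalSpace C] [TopologicalSpace X] [Countable C]
    [T3Space C] [Nonempty C] (ψ : C → Set X) (Z : Set X) (V : X → ℕ → Set X)
    (hψo : IsLSC ψ) (hψne : ∀ c, (ψ c).Nonempty) (hsub : ∀ c, ψ c ⊆ Z)
    (hVo : ∀ z k, IsOpen (V z k)) (hVm : ∀ z k, z ∈ V z k)
    (hVa : ∀ z ⦃j k : ℕ⦄, j ≤ k → V z k ⊆ V z j)
    (hVb : ∀ z ∈ Z, ∀ U : Set X, IsOpen U → z ∈ U → ∃ k, V z k ∩ Z ⊆ U) :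
    ∃ f : C → X, Continuous f ∧ ∀ c, f c ∈ ψ c := by
  classical
  obtain ⟨e, he⟩ := exists_surjective_nat C
  set clop : C → Set C → Set C := fun c A =>
    if h : IsOpen A ∧ c ∈ A then (exists_clopen_nbhd h.1 h.2).choose else ∅ with hclopdef
  have hclop : ∀ c A, IsOpen A → c ∈ A →
      IsClopen (clop c A) ∧ c ∈ clop c A ∧ clop c A ⊆ A := by
    intro c A h1 h2
    have h : IsOpen A ∧ c ∈ A := ⟨h1, h2⟩
    rw [hclopdef]
    simp only [dif_pos h]
    exact (exists_clopen_nbhd h.1 h.2).choose_spec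
  set pick : C → Set X → X := fun c T =>
    if h : (ψ c ∩ T).Nonempty then h.some else (hψne c).some with hpickdef
  have hpick1 : ∀ c T, pick c T ∈ ψ c := by
    intro c T
    rw [hpickdef]
    by_cases h : (ψ c ∩ T).Nonempty
    · simp only [dif_pos h]; exact h.some_mem.1
    · simp only [dif_neg h]; exact (hψne c).some_mem
  have hpick2 : ∀ c T, (ψ c ∩ T).Nonempty → pick c T ∈ T := by
    intro c T h
    rw [hpickdef]
    simp only [dif_pos h]
    exact h.some_mem.2
  set κ : MCtx C X := ⟨ψ, V, clop, pick, e⟩ with hκdef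
  have hκ : κ.OK := ⟨hψo, hψne, hVo, hVm, hVa, hclop, hpick1, hpick2⟩
  have hREK : ∀ n, ∀ r ∈ κ.mBuild n, κ.REK r := mBuild_REK hκ
  have hfind : ∀ c : C, ∃ n, κ.e n = c := fun c => he c
  set idx : C → ℕ := fun c => Nat.find (hfind c) with hidxdef
  have hidxe : ∀ c, κ.e (idx c) = c := fun c => Nat.find_spec (hfind c)
  have hunh : ∀ c, ¬ ∃ r' ∈ κ.mBuild (idx c), r'.pt = κ.e (idx c) := by
    rintro c ⟨r', hr', hpt⟩
    obtain ⟨hst, _, _, hpt'⟩ := mBuild_st hr'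
    have : κ.e r'.st = c := by rw [← hpt', hpt, hidxe]
    exact Nat.find_min (hfind c) hst this
  set recd : C → MRec C X := fun c => κ.mStep (κ.mBuild (idx c)) (idx c) with hrecddef
  have hrecd_mem : ∀ c, recd c ∈ κ.mBuild (idx c + 1) :=
    fun c => mem_mBuild.2 ⟨idx c, Nat.lt_succ_self _, hunh c, rfl⟩
  have hrecd_pt : ∀ c, (recd c).pt = c := fun c => hidxe c
  have hrecd_st : ∀ c, (recd c).st = idx c := fun c => rfl
  have hrecd_REK : ∀ c, κ.REK (recd c) := fun c => hREK _ _ (hrecd_mem c)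
  set f : C → X := fun c => (recd c).val with hfdef
  have hsel : ∀ c, f c ∈ ψ c := by
    intro c
    have h := (hrecd_REK c).vψ
    rwa [hrecd_pt c] at h
  refine ⟨f, ?_, hsel⟩
  rw [continuous_iff_continuousAt]
  intro c₀
  rw [ContinuousAt, tendsto_nhds]
  intro U hU hfU
  set m := idx c₀ with hmdef
  set r₀ := recd c₀ with hr₀def
  have hr₀pt : r₀.pt = c₀ := hrecd_pt c₀
  have hr₀REK : κ.REK r₀ := hrecd_REK c₀
  set x₀ := f c₀ with hx₀def
  have hx₀val : r₀.val = x₀ := rfl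
  have hx₀Z : x₀ ∈ Z := hsub c₀ (hsel c₀)
  obtain ⟨k, hk⟩ := hVb x₀ hx₀Z U hU hfU
  set N := max (m+1) k with hNdef
  set O : Set C := r₀.E k \ ((⋃ r ∈ (κ.mBuild N).filter (fun r => decide (c₀ ∉ r.E 0)), r.E 0) ∪
        ({p | ∃ r ∈ κ.mBuild N, r.pt = p} \ {c₀})) with hOdef
  -- O is open
  have hOopen : IsOpen O := by
    apply IsOpen.sdiff (hr₀REK.Ecl k).isOpen
    apply IsClosed.union
    · apply (List.finite_toSet _).isClosed_biUnion
      intro r hr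
      exact ((hREK N r (List.mem_filter.1 hr).1).Ecl 0).isClosed
    · have hfin : ({p | ∃ r ∈ κ.mBuild N, r.pt = p} \ {c₀}).Finite := by
        apply Set.Finite.diff
        have heq : {p | ∃ r ∈ κ.mBuild N, r.pt = p} = MRec.pt '' {r | r ∈ κ.mBuild N} := by
          ext p
          simp [Set.mem_image]
        rw [heq]
        exact (List.finite_toSet _).image MRec.pt
      exact hfin.isClosed
  have hc₀O : c₀ ∈ O := by
    refine ⟨by rw [← hr₀pt]; exact hr₀REK.Ept k, ?_⟩
    rintro (hmem | hmem)
    · obtain ⟨r, hr, hmem⟩ := Set.mem_iUnion₂.1 hmem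
      exact of_decide_eq_true (List.mem_filter.1 hr).2 hmem
    · exact hmem.2 rfl
  have hOEk : O ⊆ r₀.E k := fun c hc => hc.1
  have hOE0 : O ⊆ r₀.E 0 := fun c hc => hr₀REK.Ele (Nat.zero_le k) (hc.1)
  have hr₀m : ∀ t, m < t → r₀ ∈ κ.mBuild t := fun t ht => mBuild_mono ht (hrecd_mem c₀)
  -- main claim
  have main : ∀ t, m < t → (¬ ∃ r' ∈ κ.mBuild t, r'.pt = κ.e t) → κ.e t ∈ r₀.E 0 →
      ∀ c', c' ∈ O → c' ∈ (κ.mStep (κ.mBuild t) t).E 0 →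
      (κ.mStep (κ.mBuild t) t).tgt ⊆ V x₀ k := by
    intro t
    induction t using Nat.strong_induction_on with
    | _ t IH =>
    intro hmt hnh hQ0 c' hc'O hc'E
    have hex : ∃ r' ∈ κ.mBuild t, κ.e t ∈ r'.E 0 := ⟨r₀, hr₀m t hmt, hQ0⟩
    obtain ⟨rp, hrpL, hrpE, hmax, htgt, hEsub, hdisj⟩ := mStep_parent hκ (hREK t) hnh hex
    obtain ⟨hut, hrpeq, hnhu, hrppt⟩ := mBuild_st hrpL
    have hrpREK : κ.REK rp := hREK t rp hrpL
    have hc'rp : c' ∈ rp.E 0 := hrpREK.Ele (Nat.zero_le _) (hEsub hc'E)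
    rcases lt_trichotomy rp.st m with hum | hum | hum
    · -- impossible : r₀ is in the chain with larger st
      have := hmax r₀ (hr₀m t hmt) hQ0
      have hr₀st : r₀.st = m := rfl
      omega
    · -- parent is r₀
      have hrpr₀ : rp = r₀ := by
        rw [hrpeq, hum]
      subst hrpr₀
      rw [htgt, hx₀val]
      by_cases hjk : k ≤ κ.mlvl r₀ t
      · exact Set.inter_subset_right.trans (hVa x₀ hjk)
      · push_neg at hjk
        by_cases hjt : κ.mlvl r₀ t < t
        · exfalso
          refine hdisj hjt c' hc'E ?_
          exact hrpREK.Ele (by omega : κ.mlvl r₀ t + 1 ≤ k) (hOEk hc'O)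
        · exfalso
          have hjt' : κ.mlvl r₀ t = t := le_antisymm (mlvl_le r₀ t) (by omega)
          have htN : t + 1 ≤ N := by omega
          have hrmem : κ.mStep (κ.mBuild t) t ∈ κ.mBuild N :=
            mBuild_mono htN (mem_mBuild.2 ⟨t, Nat.lt_succ_self _, hnh, rfl⟩)
          have hc₀not : c₀ ∉ (κ.mStep (κ.mBuild t) t).E 0 := by
            apply mStep_E0_unhandled hκ (hREK t) hnh
            exact ⟨r₀, hr₀m t hmt, hr₀pt⟩
          refine hc'O.2 (Or.inl ?_)
          refine Set.mem_iUnion₂.2 ⟨κ.mStep (κ.mBuild t) t, ?_, hc'E⟩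
          exact List.mem_filter.2 ⟨hrmem, decide_eq_true hc₀not⟩
    · -- parent created later than m : recurse
      have hQ0u : κ.e rp.st ∈ r₀.E 0 := by
        by_contra hnot
        have hd := mStep_E0_disj hκ (hREK rp.st) hnhu (hr₀m rp.st hum) hnot
        have hc'in : c' ∈ (κ.mStep (κ.mBuild rp.st) rp.st).E 0 := by
          rw [← hrpeq]; exact hc'rp
        exact hd c' hc'in (hOE0 hc'O)
      have hc'in : c' ∈ (κ.mStep (κ.mBuild rp.st) rp.st).E 0 := by
        rw [← hrpeq]; exact hc'rp
      have hrec := IH rp.st hut hum hnhu hQ0u c' hc'O hc'in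
      rw [htgt]
      refine Set.inter_subset_left.trans ?_
      rw [hrpeq]
      exact hrec
  -- conclude
  have hOsub : O ⊆ f ⁻¹' U := by
    intro c hcO
    by_cases hcc : c = c₀
    · subst hcc
      exact hfU
    · have hct : m < idx c := by
        have hne : idx c ≠ m := by
          intro hEq
          apply hcc
          rw [← hidxe c, hEq]
          exact hidxe c₀
        by_contra hlt
        push_neg at hlt
        have hltm : idx c < m := by omega
        have hmem : recd c ∈ κ.mBuild N := mBuild_mono (by omega : idx c + 1 ≤ N) (hrecd_mem c)
        exact hcO.2 (Or.inr ⟨⟨recd c, hmem, hrecd_pt c⟩, hcc⟩)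
      have hcE : c ∈ (κ.mStep (κ.mBuild (idx c)) (idx c)).E 0 := by
        have h1 := (hrecd_REK c).Ept 0
        rwa [hrecd_pt c] at h1
      have happ := main (idx c) hct (hunh c) (by rw [hidxe c]; exact hOE0 hcO) c hcO hcE
      have hv : f c ∈ (recd c).tgt := (hrecd_REK c).vT
      have hfV : f c ∈ V x₀ k := happ hv
      exact hk ⟨hfV, hsub c (hsel c)⟩
  exact Filter.mem_of_superset (hOopen.mem_nhds hc₀O) hOsub

theorem list_exists_index {X : Type*} (Zs : ℕ → Set X)
    (hmono : ∀ {i j : ℕ}, i ≤ j → Zs i ⊆ Zs j) (l : List X)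
    (h : ∀ a ∈ l, a ∈ ⋃ n, Zs n) : ∃ m, ∀ a ∈ l, a ∈ Zs m := by
  induction l with
  | nil => exact ⟨0, by simp⟩
  | cons a t ih =>
    obtain ⟨m1, hm1⟩ := ih (fun b hb => h b (List.mem_cons_of_mem a hb))
    obtain ⟨m2, hm2⟩ := Set.mem_iUnion.1 (h a List.mem_cons_self)
    refine ⟨max m1 m2, ?_⟩
    intro b hb
    rcases List.mem_cons.1 hb with rfl | hb
    · exact hmono (le_max_right m1 m2) hm2
    · exact hmono (le_max_left m1 m2) (hm1 b hb)

theorem list_lift {X : Type*} {Z : Set X} (l : List X) (h : ∀ a ∈ l, a ∈ Z) :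
    ∃ l' : List {x // x ∈ Z}, l'.map Subtype.val = l := by
  induction l with
  | nil => exact ⟨[], rfl⟩
  | cons a t ih =>
    obtain ⟨t', ht'⟩ := ih (fun b hb => h b (List.mem_cons_of_mem a hb))
    exact ⟨⟨a, h a List.mem_cons_self⟩ :: t', by simp [ht']⟩


/-- Every `W`-space is strongly `C`-selective: strongly `C`-selective for every
countable regular space `C`. -/
theorem stmt_12 {X : Type*} [TopologicalSpace X] (h : WSpace X) :
    ∀ (C : Type*) [TopologicalSpace C] [Countable C] [T3Space C],
      StronglySelective C X := by
  intro C _ _ _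
  intro φ hφne hφlsc
  classical
  rcases isEmpty_or_nonempty C with hE | hNE
  · refine ⟨fun c => (hφne c).some, ?_, fun c => (hφne c).some_mem⟩
    rw [continuous_iff_continuousAt]
    intro c
    exact isEmptyElim c
  -- strategies
  set σ : X → List X → Set X := fun x => (h x).choose with hσdef
  have hσo : ∀ x l, IsOpen (σ x l) := fun x l => ((h x).choose_spec.1 l).1
  have hσm : ∀ x l, x ∈ σ x l := fun x l => ((h x).choose_spec.1 l).2
  have hσw : ∀ x (u : ℕ → X), (∀ n, u n ∈ σ x (List.ofFn fun i : Fin n => u i)) →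
      Tendsto u atTop (𝓝 x) := fun x => (h x).choose_spec.2
  -- the saturated countable set
  set sel : C → X := fun c => (hφne c).some with hseldef
  set pick2 : C → Set X → X := fun c T =>
    if h2 : (φ c ∩ T).Nonempty then h2.some else sel c with hpick2def
  have hpick2a : ∀ c T, (φ c ∩ T).Nonempty → pick2 c T ∈ φ c ∩ T := by
    intro c T h2
    rw [hpick2def]
    simp only [dif_pos h2]
    exact h2.some_mem
  set Zs : ℕ → Set X := fun n => Nat.rec (Set.range sel)
    (fun _ Zn => Zn ∪ Set.range (fun q : C × {x // x ∈ Zn} × List {x // x ∈ Zn} =>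
      pick2 q.1 (σ (q.2.1 : X) (q.2.2.map Subtype.val)))) n with hZsdef
  have hZs0 : Zs 0 = Set.range sel := rfl
  have hZsS : ∀ n, Zs (n+1) = Zs n ∪ Set.range
      (fun q : C × {x // x ∈ Zs n} × List {x // x ∈ Zs n} =>
        pick2 q.1 (σ (q.2.1 : X) (q.2.2.map Subtype.val))) := fun n => rfl
  have hZc : ∀ n, (Zs n).Countable := by
    intro n
    induction n with
    | zero => exact Set.countable_range sel
    | succ n ih =>
      rw [hZsS]
      have : Countable {x // x ∈ Zs n} := ih.to_subtype
      exact ih.union (Set.countable_range _)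
  have hZm : ∀ {i j : ℕ}, i ≤ j → Zs i ⊆ Zs j := by
    intro i j hij
    induction hij with
    | refl => exact subset_rfl
    | step h2 ih =>
      refine ih.trans ?_
      rw [hZsS]
      exact Set.subset_union_left
  set ZZ : Set X := ⋃ n, Zs n with hZZdef
  have hZZc : ZZ.Countable := Set.countable_iUnion hZc
  have hselZZ : ∀ c, sel c ∈ ZZ := fun c => Set.mem_iUnion.2 ⟨0, ⟨c, rfl⟩⟩
  have hcl : ∀ (c : C) (z : X) (l : List X), z ∈ ZZ → (∀ a ∈ l, a ∈ ZZ) →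
      pick2 c (σ z l) ∈ ZZ := by
    intro c z l hz hl
    obtain ⟨m1, hm1⟩ := list_exists_index Zs hZm l hl
    obtain ⟨m2, hm2⟩ := Set.mem_iUnion.1 hz
    set m := max m1 m2 with hm
    have hzZ : z ∈ Zs m := hZm (le_max_right m1 m2) hm2
    have hlZ : ∀ a ∈ l, a ∈ Zs m := fun a ha => hZm (le_max_left m1 m2) (hm1 a ha)
    obtain ⟨l', hl'⟩ := list_lift l hlZ
    refine Set.mem_iUnion.2 ⟨m+1, ?_⟩
    rw [hZsS]
    right
    exact ⟨⟨c, ⟨z, hzZ⟩, l'⟩, by simp [hl']⟩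
  -- ψ and its properties
  set ψ : C → Set X := fun c => φ c ∩ ZZ with hψdef
  have hψne : ∀ c, (ψ c).Nonempty := fun c => ⟨sel c, (hφne c).some_mem, hselZZ c⟩
  have hψsub : ∀ c, ψ c ⊆ ZZ := fun c => Set.inter_subset_right
  have hψo : IsLSC ψ := by
    intro U hU
    rw [isOpen_iff_forall_mem_open]
    intro c hc
    obtain ⟨z, ⟨hzφ, hzZZ⟩, hzU⟩ := hc
    obtain ⟨l, hlZ, hsub⟩ := trace_base σ hσm hσw ZZ z U hU hzU
    refine ⟨{c' | (φ c' ∩ σ z l).Nonempty}, ?_, hφlsc _ (hσo z l), ⟨z, hzφ, hσm z l⟩⟩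
    intro c' hc'
    have hy := hpick2a c' (σ z l) hc'
    have hyZZ : pick2 c' (σ z l) ∈ ZZ := hcl c' z l hzZZ hlZ
    exact ⟨pick2 c' (σ z l), ⟨hy.1, hyZZ⟩, hsub ⟨hy.2, hyZZ⟩⟩
  -- the V-family
  have : Countable {x // x ∈ ZZ} := hZZc.to_subtype
  obtain ⟨gL, hgL⟩ := exists_surjective_nat (List {x // x ∈ ZZ})
  set V : X → ℕ → Set X := fun z k => ⋂ i ∈ Set.Iic k, σ z ((gL i).map Subtype.val) with hVdef
  have hVo : ∀ z k, IsOpen (V z k) :=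
    fun z k => (Set.finite_Iic k).isOpen_biInter (fun i _ => hσo z _)
  have hVm : ∀ z k, z ∈ V z k := fun z k => Set.mem_iInter₂.2 fun i _ => hσm z _
  have hVa : ∀ z ⦃j k : ℕ⦄, j ≤ k → V z k ⊆ V z j := by
    intro z j k hjk x hx
    exact Set.mem_iInter₂.2 fun i hi => Set.mem_iInter₂.1 hx i (le_trans hi hjk)
  have hVb : ∀ z ∈ ZZ, ∀ U : Set X, IsOpen U → z ∈ U → ∃ k, V z k ∩ ZZ ⊆ U := by
    intro z hz U hU hzU
    obtain ⟨l, hlZ, hsub⟩ := trace_base σ hσm hσw ZZ z U hU hzU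
    obtain ⟨l', hl'⟩ := list_lift l hlZ
    obtain ⟨i, hi⟩ := hgL l'
    refine ⟨i, ?_⟩
    intro x hx
    have h1 : x ∈ σ z ((gL i).map Subtype.val) :=
      Set.mem_iInter₂.1 hx.1 i (le_refl i)
    rw [hi, hl'] at h1
    exact hsub ⟨h1, hx.2⟩
  obtain ⟨f, hfc, hfs⟩ := michael ψ ZZ V hψo hψne hψsub hVo hVm hVa hVb
  exact ⟨f, hfc, fun c => (hfs c).1⟩
end

section
/- There exist two GO-spaces X and Y whose product X × Y is not L-selective. Specifically, with X = (ω₁·ω + 1) ∖ {ω₁·n : n ∈ ω} and Y = ω₁ + 1 (both with the subspace/order topology), the map φ: ω+1 → F(X×Y) defined by φ(n) = {(ω₁·n + α, α) : α < ω₁} and φ(ω) = {(ω₁·ω, ω₁)} is lower semicontinuous and closed-valued but has no continuous selection. -/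
open Topology Filter Set

noncomputable section

/-- `ω₁` as an ordinal. -/
noncomputable def omega1 : Ordinal := (Cardinal.aleph 1).ord

/-- The GO-space `X = (ω₁·ω + 1) \\ {ω₁·n : n ∈ ω}`, as a subspace of the ordinals. -/
def XSet : Set Ordinal := {o | o ≤ omega1 * Ordinal.omega0 ∧ ∀ n : ℕ, o ≠ omega1 * n}

/-- The GO-space `Y = ω₁ + 1`, as the subspace `Iic ω₁` of the ordinals. -/
def YSet : Set Ordinal := Set.Iic omega1

/-- The mapping `φ` with `φ(n) = {(ω₁·n + α, α) : α < ω₁}` and `φ(ω) = {(ω₁·ω, ω₁)}`. -/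
def phi14 (k : ℕ∞) : Set (XSet × YSet) :=
  {p | (k = ⊤ ∧ (p.1 : Ordinal) = omega1 * Ordinal.omega0 ∧ (p.2 : Ordinal) = omega1) ∨
       (∃ n : ℕ, k = (n : ℕ∞) ∧ ∃ α : Ordinal, α < omega1 ∧
         (p.1 : Ordinal) = omega1 * n + α ∧ (p.2 : Ordinal) = α)}


universe a b u

lemma omega1_isLimit : Order.IsSuccLimit omega1.{u} :=
  Cardinal.isSuccLimit_ord (Cardinal.aleph0_le_aleph 1)

lemma omega1_pos : 0 < omega1.{u} := omega1_isLimit.pos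

lemma mul_nat_lt (n : ℕ) : omega1.{u} * n < omega1 * Ordinal.omega0 := by
  rw [mul_lt_mul_iff_right₀ omega1_pos]
  exact Ordinal.nat_lt_omega0 n

lemma mul_succ_eq (n : ℕ) : omega1.{u} * (n + 1 : ℕ) = omega1 * n + omega1 := by
  push_cast
  rw [mul_add, mul_one]

lemma mem_XSet {n : ℕ} {α : Ordinal.{u}} (h0 : 0 < α) (h1 : α < omega1) :
    omega1 * n + α ∈ XSet := by
  have hlt : omega1 * n + α < omega1 * ((n + 1 : ℕ) : Ordinal.{u}) := by
    rw [mul_succ_eq]; exact (add_lt_add_iff_left _).2 h1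
  constructor
  · exact le_of_lt (hlt.trans_le (le_of_lt (mul_nat_lt (n + 1))))
  · intro m hm
    rcases le_or_gt m n with h | h
    · have h2 : omega1 * (m : Ordinal.{u}) ≤ omega1 * n :=
        mul_le_mul_right (Nat.cast_le.2 h) _
      exact absurd hm (ne_of_gt (h2.trans_lt (lt_add_of_pos_right _ h0)))
    · have h2 : omega1 * ((n + 1 : ℕ) : Ordinal.{u}) ≤ omega1 * m :=
        mul_le_mul_right (Nat.cast_le.2 h) _
      exact absurd hm (ne_of_lt (hlt.trans_le h2))

lemma top_mem_XSet : omega1.{u} * Ordinal.omega0 ∈ XSet :=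
  ⟨le_rfl, fun n => (mul_nat_lt n).ne'⟩

lemma omega1_mem_YSet : omega1.{u} ∈ YSet := Set.self_mem_Iic

lemma lift_omega1 : Ordinal.lift.{b} omega1.{a} = omega1.{max a b} := by
  show Ordinal.lift.{b} (Cardinal.aleph 1).ord = _
  rw [Cardinal.lift_ord, Cardinal.lift_aleph, Ordinal.lift_one]
  rfl

lemma lift_omega1_swap :
    Ordinal.lift.{b} omega1.{a} = Ordinal.lift.{a} omega1.{b} := by
  rw [lift_omega1, lift_omega1]

/-- transfer an ordinal below `ω₁` to another universe -/
lemma omega1_transfer {α' : Ordinal.{b}} (h : α' < omega1.{b}) :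
    ∃ α : Ordinal.{a}, α < omega1.{a} ∧ Ordinal.lift.{b} α = Ordinal.lift.{a} α' := by
  have h1 : Ordinal.lift.{a} α' < Ordinal.lift.{b} omega1.{a} := by
    rw [lift_omega1_swap]
    exact Ordinal.lift_lt.2 h
  obtain ⟨α, hα, hlift⟩ := Ordinal.lt_lift_iff.1 h1
  exact ⟨α, hα, hlift⟩

lemma lift_continuous : Continuous (Ordinal.lift.{b, a}) := by
  have hs : StrictMono Ordinal.lift.{b, a} := fun x y h => Ordinal.lift_lt.2 h
  have hc : Set.OrdConnected (Set.range Ordinal.lift.{b, a}) := by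
    constructor
    rintro x ⟨x', rfl⟩ y ⟨y', rfl⟩ z hz
    exact Ordinal.mem_range_lift_of_le hz.2
  exact (hs.isEmbedding_of_ordConnected hc).continuous

/-- a two-universe version of `phi14` -/
def phiAB (k : ℕ∞) : Set (XSet.{a} × YSet.{b}) :=
  {p | (k = ⊤ ∧ (p.1 : Ordinal) = omega1 * Ordinal.omega0 ∧ (p.2 : Ordinal) = omega1) ∨
       (∃ n : ℕ, k = (n : ℕ∞) ∧ ∃ α : Ordinal.{a}, α < omega1 ∧
         (p.1 : Ordinal) = omega1 * n + α ∧
         Ordinal.lift.{b} α = Ordinal.lift.{a} (p.2 : Ordinal))}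

lemma phiAB_top : phiAB.{a, b} ⊤ =
    {p : XSet × YSet | (p.1 : Ordinal) = omega1 * Ordinal.omega0 ∧ (p.2 : Ordinal) = omega1} := by
  ext p
  constructor
  · rintro (⟨-, h⟩ | ⟨n, hn, -⟩)
    · exact h
    · exact absurd hn (by simp)
  · intro h
    exact Or.inl ⟨rfl, h⟩

/-- the point `(ω₁·ω, ω₁)` -/
def ptInf : XSet.{a} × YSet.{b} :=
  (⟨omega1 * Ordinal.omega0, top_mem_XSet⟩, ⟨omega1, omega1_mem_YSet⟩)

lemma ptInf_mem_top : ptInf.{a, b} ∈ phiAB ⊤ := by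
  rw [phiAB_top]; exact ⟨rfl, rfl⟩

lemma snd_lt_of_mem_nat {n : ℕ} {p : XSet.{a} × YSet.{b}} (hp : p ∈ phiAB (n : ℕ∞)) :
    (p.2 : Ordinal) < omega1 := by
  rcases hp with ⟨h, -⟩ | ⟨m, -, α, hα, -, h2⟩
  · exact absurd h (by simp)
  · rw [← Ordinal.lift_lt.{a}, ← h2, lift_omega1_swap]
    exact Ordinal.lift_lt.2 hα

lemma phiAB_nat (n : ℕ) :
    phiAB.{a, b} (n : ℕ∞) =
      {p : XSet × YSet | Ordinal.lift.{b} (p.1 : Ordinal) =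
        Ordinal.lift.{b} (omega1.{a} * n) + Ordinal.lift.{a} (p.2 : Ordinal)} := by
  ext p
  constructor
  · rintro (⟨h, -⟩ | ⟨m, hm, α, hα, h1, h2⟩)
    · exact absurd h (by simp)
    · have hmn : m = n := by exact_mod_cast hm.symm
      subst hmn
      show Ordinal.lift.{b} (p.1 : Ordinal) = _
      rw [h1, Ordinal.lift_add, h2]
  · intro h
    simp only [Set.mem_setOf_eq] at h
    have hp2 : (p.2 : Ordinal) < omega1 := by
      rcases lt_or_eq_of_le (show (p.2 : Ordinal) ≤ omega1 from p.2.2) with h' | h'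
      · exact h'
      · exfalso
        apply p.1.2.2 (n + 1)
        rw [h', lift_omega1_swap.symm, ← Ordinal.lift_add, ← mul_succ_eq] at h
        exact Ordinal.lift_inj.1 h
    obtain ⟨α, hα, hlift⟩ := omega1_transfer.{a, b} hp2
    refine Or.inr ⟨n, rfl, α, hα, ?_, hlift⟩
    rw [← hlift, ← Ordinal.lift_add] at h
    exact Ordinal.lift_inj.1 h

lemma ord_continuous_add_left (c : Ordinal.{u}) : Continuous (fun x : Ordinal.{u} => c + x) :=
  ((Order.isNormal_iff_strictMono_and_continuous (f := fun x : Ordinal.{u} => c + x)).1 (Ordinal.isNormal_add_right c)).2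

theorem phiAB_nonempty : ∀ k, (phiAB.{a, b} k).Nonempty := by
  intro k
  induction k using ENat.recTopCoe with
  | top => exact ⟨ptInf, ptInf_mem_top⟩
  | coe n =>
    have h1 : (1 : Ordinal.{a}) < omega1 := Ordinal.one_lt_of_isSuccLimit omega1_isLimit
    have h1' : (1 : Ordinal.{b}) < omega1 := Ordinal.one_lt_of_isSuccLimit omega1_isLimit
    refine ⟨(⟨omega1 * n + 1, mem_XSet zero_lt_one h1⟩, ⟨1, h1'.le⟩), ?_⟩
    refine Or.inr ⟨n, rfl, 1, h1, rfl, ?_⟩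
    rw [Ordinal.lift_one, Ordinal.lift_one]

theorem phiAB_closed : ∀ k, IsClosed (phiAB.{a, b} k) := by
  intro k
  induction k using ENat.recTopCoe with
  | top =>
    rw [phiAB_top]
    exact (isClosed_eq (continuous_subtype_val.comp continuous_fst) continuous_const).inter
      (isClosed_eq (continuous_subtype_val.comp continuous_snd) continuous_const)
  | coe n =>
    rw [phiAB_nat]
    exact isClosed_eq
      (lift_continuous.comp (continuous_subtype_val.comp continuous_fst))
      ((ord_continuous_add_left _).comp
        (lift_continuous.comp (continuous_subtype_val.comp continuous_snd)))

theorem phiAB_lsc : IsLSC phiAB.{a, b} := by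
  intro U hU
  rw [isOpen_iff_mem_nhds]
  intro k hk
  induction k using ENat.recTopCoe with
  | coe n => rw [ENat.mem_nhds_iff (ENat.coe_ne_top n)]; exact hk
  | top =>
    obtain ⟨p, hp, hpU⟩ := hk
    rw [phiAB_top] at hp
    have hpt : p = ptInf := Prod.ext (Subtype.ext hp.1) (Subtype.ext hp.2)
    subst hpt
    have hUnhds : U ∈ 𝓝 ptInf.{a, b} := hU.mem_nhds hpU
    rw [mem_nhds_prod_iff] at hUnhds
    obtain ⟨u, hu, v, hv, huv⟩ := hUnhds
    rw [nhds_subtype_eq_comap, mem_comap] at hu hv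
    obtain ⟨t, ht, htu⟩ := hu
    obtain ⟨s, hs, hsv⟩ := hv
    obtain ⟨a', ha, hat⟩ := (SuccOrder.hasBasis_nhds_Ioc_of_exists_lt ⟨0, pos_iff_ne_zero.2
      (show omega1.{a} * Ordinal.omega0 ≠ 0 from
        mul_ne_zero omega1_pos.ne' Ordinal.omega0_ne_zero)⟩).mem_iff.1 ht
    obtain ⟨b', hb, hbs⟩ := (SuccOrder.hasBasis_nhds_Ioc_of_exists_lt ⟨0, omega1_pos⟩).mem_iff.1 hs
    obtain ⟨c, hc, hac⟩ := (Ordinal.lt_mul_iff_of_isSuccLimit Ordinal.isSuccLimit_omega0).1 ha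
    obtain ⟨m, rfl⟩ := Ordinal.lt_omega0.1 hc
    refine mem_of_superset (isOpen_Ioi.mem_nhds (ENat.coe_lt_top m)) ?_
    intro k hk
    induction k using ENat.recTopCoe with
    | top =>
      refine ⟨ptInf, ptInf_mem_top, huv ⟨?_, ?_⟩⟩
      · exact htu (hat ⟨ha, le_rfl⟩)
      · exact hsv (hbs ⟨hb, le_rfl⟩)
    | coe j =>
      have hmj : m ≤ j := by
        have h' : (m : ℕ∞) < j := hk
        exact_mod_cast h'.le
      have hα'1 : b' + 1 < omega1.{b} := by
          rw [Ordinal.add_one_eq_succ]; exact omega1_isLimit.succ_lt hb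
      obtain ⟨α, hα, hlift⟩ := omega1_transfer.{a, b} hα'1
      have hα0 : (0 : Ordinal.{a}) < α := by
        have h0 : (0 : Ordinal.{b}) < b' + 1 := lt_of_le_of_lt (zero_le (a := b')) (lt_add_one b')
        have h1 : Ordinal.lift.{b} (0 : Ordinal.{a}) < Ordinal.lift.{b} α := by
          rw [Ordinal.lift_zero, hlift]
          simpa using Ordinal.lift_lt.{a}.2 h0
        exact Ordinal.lift_lt.1 h1
      refine ⟨(⟨omega1 * j + α, mem_XSet hα0 hα⟩, ⟨b' + 1, hα'1.le⟩),
        Or.inr ⟨j, rfl, α, hα, rfl, hlift⟩, huv ⟨?_, ?_⟩⟩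
      · apply htu
        apply hat
        constructor
        · calc a' < omega1 * (m : Ordinal.{a}) := hac
          _ ≤ omega1 * j := mul_le_mul_right (Nat.cast_le.2 hmj) _
          _ ≤ omega1 * j + α := le_add_of_nonneg_right hα0.le
        · exact (mem_XSet hα0 hα).1
      · exact hsv (hbs ⟨lt_add_one b', hα'1.le⟩)

theorem phiAB_no_selection :
    ¬ ∃ f : ℕ∞ → XSet.{a} × YSet.{b}, Continuous f ∧ ∀ k, f k ∈ phiAB k := by
  rintro ⟨f, hf, hsel⟩
  have htop : ((f ⊤).2 : Ordinal) = omega1 := by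
    have h := hsel ⊤
    rw [phiAB_top] at h
    exact h.2
  have hlt : ∀ n : ℕ, ((f (n : ℕ∞)).2 : Ordinal) < omega1 :=
    fun n => snd_lt_of_mem_nat (hsel (n : ℕ∞))
  set β : Ordinal.{b} := ⨆ n : ℕ, ((f (n : ℕ∞)).2 : Ordinal) with hβ
  have hβlt : β < omega1 := by
    have h := Ordinal.iSup_lt_omega_one (fun n => by have := hlt n; rwa [omega1, Cardinal.ord_aleph] at this)
    rwa [omega1, Cardinal.ord_aleph]
  have hcast : Tendsto (fun n : ℕ => (n : ℕ∞)) atTop (𝓝 ⊤) := by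
    rw [ENat.tendsto_nhds_top_iff_natCast_lt]
    intro n
    filter_upwards [eventually_gt_atTop n] with x hx using by exact_mod_cast hx
  have hcont : Continuous (fun k : ℕ∞ => ((f k).2 : Ordinal)) :=
    continuous_subtype_val.comp (continuous_snd.comp hf)
  have htend : Tendsto (fun n : ℕ => ((f (n : ℕ∞)).2 : Ordinal)) atTop (𝓝 omega1) := by
    rw [← htop]
    exact (hcont.tendsto ⊤).comp hcast
  obtain ⟨n, hn⟩ :=
    (htend.eventually_mem (isOpen_Ioi.mem_nhds (show omega1.{b} ∈ Set.Ioi β from hβlt))).exists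
  have hn' : β < ((f (n : ℕ∞)).2 : Ordinal) := hn
  exact absurd (Ordinal.le_iSup (fun n : ℕ => ((f (n : ℕ∞)).2 : Ordinal)) n) (not_le.2 hn')

lemma phi14_eq : phi14.{u} = phiAB.{u, u} := by
  funext k
  ext p
  constructor
  · rintro (h | ⟨n, hn, α, hα, h1, h2⟩)
    · exact Or.inl h
    · exact Or.inr ⟨n, hn, α, hα, h1, by rw [Ordinal.lift_id, Ordinal.lift_id, h2]⟩
  · rintro (h | ⟨n, hn, α, hα, h1, h2⟩)
    · exact Or.inl h
    · rw [Ordinal.lift_id, Ordinal.lift_id] at h2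
      exact Or.inr ⟨n, hn, α, hα, h1, h2.symm⟩

/-- The product of the two GO-spaces `X` and `Y` is not L-selective: the map `φ` is
l.s.c. and closed-valued with nonempty values, but has no continuous selection. -/
theorem stmt_14 :
    (∀ k, (phi14 k).Nonempty) ∧ (∀ k, IsClosed (phi14 k)) ∧ IsLSC phi14 ∧
      (¬ ∃ f : ℕ∞ → XSet × YSet, Continuous f ∧ ∀ k, f k ∈ phi14 k) ∧
      ¬ Selective ℕ∞ (XSet × YSet) := by
  refine ⟨?_, ?_, ?_, ?_, ?_⟩
  · rw [phi14_eq]; exact phiAB_nonempty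
  · rw [phi14_eq]; exact phiAB_closed
  · rw [phi14_eq]; exact phiAB_lsc
  · rw [phi14_eq]; exact phiAB_no_selection
  · intro h
    exact phiAB_no_selection (h phiAB phiAB_nonempty phiAB_closed phiAB_lsc)

end
end

section
/- Every countable metrizable space is homeomorphic to a closed subspace of the rationals ℚ. -/
open Topology Filter Set

/-- In a countable metric space, every point has arbitrarily small clopen balls. -/
lemma exists_clopen_ball_aux {M : Type*} [MetricSpace M] [Countable M] (x : M) {ε : ℝ}
    (hε : 0 < ε) : ∃ U : Set M, IsClopen U ∧ x ∈ U ∧ U ⊆ Metric.ball x ε := by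
  have hcnt : (Set.range fun y : M => dist y x).Countable := Set.countable_range _
  have hns : ¬ (Set.Ioo (0:ℝ) ε ⊆ Set.range fun y : M => dist y x) := by
    intro h
    have h0 : MeasureTheory.volume (Set.Ioo (0:ℝ) ε) = 0 :=
      MeasureTheory.measure_mono_null h (hcnt.measure_zero _)
    rw [Real.volume_Ioo] at h0
    simp only [ENNReal.ofReal_eq_zero] at h0
    linarith
  obtain ⟨r, hr, hrn⟩ := Set.not_subset.1 hns
  have hball : Metric.ball x r = Metric.closedBall x r := by
    ext y
    simp only [Metric.mem_ball, Metric.mem_closedBall]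
    constructor
    · exact le_of_lt
    · intro h
      rcases lt_or_eq_of_le h with h' | h'
      · exact h'
      · exact absurd ⟨y, h'⟩ hrn
  exact ⟨Metric.ball x r, ⟨by rw [hball]; exact Metric.isClosed_closedBall, Metric.isOpen_ball⟩,
    Metric.mem_ball_self hr.1, Metric.ball_subset_ball hr.2.le⟩

/-- A countable clopen "basis" family. -/
lemma exists_clopen_family {M : Type*} [MetricSpace M] [Countable M] [Nonempty M] :
    ∃ U : ℕ → Set M, (∀ i, IsClopen (U i)) ∧
      ∀ (x : M) (ε : ℝ), 0 < ε → ∃ j, x ∈ U j ∧ U j ⊆ Metric.ball x ε := by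
  obtain ⟨c, hc⟩ := exists_surjective_nat (M × ℕ)
  have H : ∀ p : M × ℕ, ∃ U : Set M, IsClopen U ∧ p.1 ∈ U ∧
      U ⊆ Metric.ball p.1 (1 / (p.2 + 1)) := fun p =>
    exists_clopen_ball_aux p.1 (by positivity)
  choose U0 hU0c hU0m hU0s using H
  refine ⟨U0 ∘ c, fun i => hU0c _, fun x ε hε => ?_⟩
  obtain ⟨n, hn⟩ := exists_nat_one_div_lt hε
  obtain ⟨j, hj⟩ := hc (x, n)
  refine ⟨j, ?_, ?_⟩
  · simpa [hj] using hU0m (x, n)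
  · intro y hy
    have := hU0s (x, n) (by simpa [hj] using hy)
    simp only [Metric.mem_ball] at this ⊢
    calc dist y x < 1 / (n + 1) := by exact_mod_cast this
    _ < ε := hn

/-- Every countable metric space embeds into `ℝ`. -/
lemma exists_isEmbedding_real (M : Type*) [MetricSpace M] [Countable M] [Nonempty M] :
    ∃ e : M → ℝ, Topology.IsEmbedding e := by
  classical
  obtain ⟨U, hUc, hUb⟩ := exists_clopen_family (M := M)
  set g : ℕ → ℝ := fun i => 2 / 3 ^ (i + 1) with hgdef
  have hg_sum : Summable g := by
    have h1 : Summable fun i : ℕ => (2 / 3 : ℝ) * (1 / 3) ^ i :=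
      (summable_geometric_of_lt_one (by norm_num) (by norm_num)).mul_left _
    refine h1.congr fun i => ?_
    simp only [hgdef]
    rw [pow_succ]
    field_simp
    rw [← mul_pow]; norm_num
  set d : ℕ → M → ℝ := fun i => Set.indicator (U i) (fun _ => g i) with hddef
  have hg_nonneg : ∀ i, 0 ≤ g i := fun i => by positivity
  have hd_bound : ∀ i z, ‖d i z‖ ≤ g i := by
    intro i z
    rw [Real.norm_eq_abs]
    by_cases h : z ∈ U i
    · simp [hddef, Set.indicator_of_mem h, abs_of_nonneg (hg_nonneg i)]
    · simp [hddef, Set.indicator_of_notMem h, hg_nonneg i]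
  have hd_cont : ∀ i, Continuous (d i) := fun i =>
    continuous_indicator (by simp [hUc i]) continuous_const.continuousOn
  have hsum : ∀ z, Summable fun i => d i z :=
    fun z => Summable.of_norm_bounded hg_sum (fun i => hd_bound i z)
  set e : M → ℝ := fun z => ∑' i, d i z with hedef
  have he_cont : Continuous e := continuous_tsum hd_cont hg_sum (fun n z => hd_bound n z)
  -- tail sum computation
  have tail_sum : ∀ k : ℕ, ∑' i, g (i + (k + 1)) = ((3 : ℝ) ^ (k + 1))⁻¹ := by
    intro k
    have h1 : ∀ i : ℕ, g (i + (k + 1)) = (2 / 3 ^ (k + 2)) * (1 / 3 : ℝ) ^ i := by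
      intro i
      simp only [hgdef]
      field_simp
      have h13 : (1/3:ℝ)^i * 3^i = 1 := by rw [← mul_pow]; norm_num
      linear_combination (-((3:ℝ)^k*9)) * h13
    rw [tsum_congr h1, tsum_mul_left, tsum_geometric_of_lt_one (by norm_num) (by norm_num)]
    rw [pow_succ, pow_succ]
    field_simp
    ring
  -- the key estimate
  have key : ∀ x y : M, ∀ k : ℕ, (∀ i < k, (x ∈ U i ↔ y ∈ U i)) → x ∈ U k → y ∉ U k →
      ((3 : ℝ) ^ (k + 1))⁻¹ ≤ e x - e y := by
    intro x y k hagree hx hy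
    have hsub : Summable fun i => d i x - d i y := (hsum x).sub (hsum y)
    have hsplit := Summable.sum_add_tsum_nat_add (k + 1) hsub
    have head : ∑ i ∈ Finset.range (k + 1), (d i x - d i y) = g k := by
      rw [Finset.sum_range_succ]
      have h0 : ∑ i ∈ Finset.range k, (d i x - d i y) = 0 := by
        refine Finset.sum_eq_zero fun i hi => ?_
        have hiff := hagree i (Finset.mem_range.1 hi)
        by_cases h : x ∈ U i
        · show (U i).indicator (fun _ => g i) x - (U i).indicator (fun _ => g i) y = 0
          rw [Set.indicator_of_mem h, Set.indicator_of_mem (hiff.1 h), sub_self]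
        · show (U i).indicator (fun _ => g i) x - (U i).indicator (fun _ => g i) y = 0
          rw [Set.indicator_of_notMem h,
            Set.indicator_of_notMem (fun hyy => h (hiff.2 hyy)), sub_self]
      rw [h0, zero_add]
      show (U k).indicator (fun _ => g k) x - (U k).indicator (fun _ => g k) y = g k
      rw [Set.indicator_of_mem hx, Set.indicator_of_notMem hy, sub_zero]
    have htail_sumable : Summable fun i => d (i + (k + 1)) x - d (i + (k + 1)) y :=
      (summable_nat_add_iff (f := fun i => d i x - d i y) (k + 1)).2 hsub
    have tailb : |∑' i, (d (i + (k + 1)) x - d (i + (k + 1)) y)| ≤ ((3 : ℝ) ^ (k + 1))⁻¹ := by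
      rw [← Real.norm_eq_abs]
      calc ‖∑' i, (d (i + (k + 1)) x - d (i + (k + 1)) y)‖
          ≤ ∑' i, ‖d (i + (k + 1)) x - d (i + (k + 1)) y‖ := by
            apply norm_tsum_le_tsum_norm
            exact htail_sumable.abs
        _ ≤ ∑' i, g (i + (k + 1)) := by
            apply Summable.tsum_le_tsum _ htail_sumable.abs
              ((summable_nat_add_iff (f := g) (k+1)).2 hg_sum)
            intro i
            have h1 : 0 ≤ d (i + (k + 1)) x :=
              Set.indicator_nonneg (fun _ _ => hg_nonneg _) x
            have h2 : 0 ≤ d (i + (k + 1)) y :=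
              Set.indicator_nonneg (fun _ _ => hg_nonneg _) y
            have h3 := (abs_le.1 (Real.norm_eq_abs _ ▸ hd_bound (i + (k + 1)) x)).2
            have h4 := (abs_le.1 (Real.norm_eq_abs _ ▸ hd_bound (i + (k + 1)) y)).2
            rw [abs_sub_le_iff]
            exact ⟨by linarith, by linarith⟩
        _ = ((3 : ℝ) ^ (k + 1))⁻¹ := tail_sum k
    have habs := (abs_le.1 tailb).1
    have hgk : g k = 2 * ((3 : ℝ) ^ (k + 1))⁻¹ := div_eq_mul_inv _ _
    have hE : e x - e y = g k + ∑' i, (d (i + (k + 1)) x - d (i + (k + 1)) y) := by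
      show (∑' i, d i x) - (∑' i, d i y) = _
      rw [← Summable.tsum_sub (hsum x) (hsum y), ← hsplit, head]
    rw [hE, hgk]
    linarith
  -- the comparison with `dist` on both sides
  have main : ∀ x y : M, ∀ j : ℕ, x ∈ U j → y ∉ U j →
      ((3 : ℝ) ^ (j + 1))⁻¹ ≤ |e x - e y| := by
    intro x y j hxj hyj
    have hex : ∃ k, ¬(x ∈ U k ↔ y ∈ U k) := ⟨j, by tauto⟩
    have hkspec := Nat.find_spec hex
    have hkle : Nat.find hex ≤ j := Nat.find_min' hex (by tauto)
    set k := Nat.find hex with hk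
    have hagree : ∀ i < k, (x ∈ U i ↔ y ∈ U i) := fun i hi => not_not.1 (Nat.find_min hex hi)
    have hpow : ((3 : ℝ) ^ (j + 1))⁻¹ ≤ ((3 : ℝ) ^ (k + 1))⁻¹ := by
      apply inv_anti₀ (by positivity)
      exact pow_le_pow_right₀ (by norm_num) (by omega)
    by_cases hxk : x ∈ U k
    · have hyk : y ∉ U k := fun h => hkspec ⟨fun _ => h, fun _ => hxk⟩
      calc ((3 : ℝ) ^ (j + 1))⁻¹ ≤ ((3 : ℝ) ^ (k + 1))⁻¹ := hpow
        _ ≤ e x - e y := key x y k hagree hxk hyk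
        _ ≤ |e x - e y| := le_abs_self _
    · have hyk : y ∈ U k := by tauto
      rw [abs_sub_comm]
      calc ((3 : ℝ) ^ (j + 1))⁻¹ ≤ ((3 : ℝ) ^ (k + 1))⁻¹ := hpow
        _ ≤ e y - e x := key y x k (fun i hi => (hagree i hi).symm) hyk hxk
        _ ≤ |e y - e x| := le_abs_self _
  have hinj : Function.Injective e := by
    intro x y hxy
    by_contra hne
    have hd : 0 < dist x y := dist_pos.2 hne
    obtain ⟨j, hxj, hsubj⟩ := hUb x (dist x y) hd
    have hyj : y ∉ U j := by
      intro h
      have := hsubj h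
      rw [Metric.mem_ball, dist_comm] at this
      exact lt_irrefl _ this
    have := main x y j hxj hyj
    rw [hxy, sub_self, abs_zero] at this
    have : ((3 : ℝ) ^ (j + 1))⁻¹ > 0 := by positivity
    linarith [main x y j hxj hyj, hxy ▸ (rfl : e x = e x)]
  have hind : Topology.IsInducing e := by
    rw [isInducing_iff_nhds]
    intro x
    refine le_antisymm (he_cont.tendsto x).le_comap ?_
    intro s hs
    rw [Metric.mem_nhds_iff] at hs
    obtain ⟨ε, hε, hball⟩ := hs
    obtain ⟨j, hxj, hsubj⟩ := hUb x ε hε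
    rw [mem_comap]
    refine ⟨Metric.ball (e x) (((3 : ℝ) ^ (j + 1))⁻¹),
      Metric.ball_mem_nhds _ (by positivity), ?_⟩
    intro y hy
    apply hball
    apply hsubj
    by_contra hyU
    have hle := main x y j hxj hyU
    rw [Set.mem_preimage, Metric.mem_ball, Real.dist_eq, abs_sub_comm] at hy
    linarith
  exact ⟨e, Topology.IsEmbedding.mk hind hinj⟩

/-- Every countable metrizable space is homeomorphic to a closed subspace of `ℚ`. -/
theorem stmt_16 (M : Type*) [TopologicalSpace M] [Countable M]
    [TopologicalSpace.MetrizableSpace M] :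
    ∃ A : Set ℚ, IsClosed A ∧ Nonempty (M ≃ₜ A) := by
  rcases isEmpty_or_nonempty M with hM | hM
  · refine ⟨∅, isClosed_empty, ⟨?_⟩⟩
    haveI : IsEmpty (↥(∅ : Set ℚ)) := Set.isEmpty_coe_sort.2 rfl
    exact
      { toEquiv := Equiv.equivOfIsEmpty M ↥(∅ : Set ℚ)
        continuous_toFun := continuous_def.2 fun s _ => by
          rw [Set.eq_empty_of_isEmpty (_ ⁻¹' s)]; exact isOpen_empty
        continuous_invFun := continuous_def.2 fun s _ => by
          rw [Set.eq_empty_of_isEmpty (_ ⁻¹' s)]; exact isOpen_empty }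
  letI : MetricSpace M := TopologicalSpace.metrizableSpaceMetric M
  obtain ⟨e, he⟩ := exists_isEmbedding_real M
  set T : Set ℝ := Set.range e with hT
  set C : Set ℝ := closure T with hC
  obtain ⟨s, hs_cnt, hs_dense⟩ := TopologicalSpace.exists_countable_dense ↥(Cᶜ)
  set D : Set ℝ := Subtype.val '' s with hD
  have hD_cnt : D.Countable := hs_cnt.image _
  have hDC : D ⊆ Cᶜ := by rintro _ ⟨⟨z, hz⟩, _, rfl⟩; exact hz
  set Y : Set ℝ := T ∪ D with hY
  have hT_cnt : T.Countable := Set.countable_range e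
  have hY_cnt : Y.Countable := hT_cnt.union hD_cnt
  have hbtwn : ∀ a b : ℝ, a < b → ∃ y ∈ Y, a < y ∧ y < b := by
    intro a b hab
    by_cases hcase : (Set.Ioo a b ∩ Cᶜ).Nonempty
    · obtain ⟨z, hz1, hz2⟩ := hcase
      have hopen : IsOpen (Set.Ioo a b ∩ Cᶜ) :=
        isOpen_Ioo.inter isClosed_closure.isOpen_compl
      have hne : (Subtype.val ⁻¹' (Set.Ioo a b ∩ Cᶜ) : Set ↥(Cᶜ)).Nonempty :=
        ⟨⟨z, hz2⟩, hz1, hz2⟩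
      have hop : IsOpen (Subtype.val ⁻¹' (Set.Ioo a b ∩ Cᶜ) : Set ↥(Cᶜ)) :=
        hopen.preimage continuous_subtype_val
      obtain ⟨w, hws, hw⟩ := hs_dense.exists_mem_open hop hne
      exact ⟨(w : ℝ), Or.inr ⟨w, hws, rfl⟩, hw.1.1, hw.1.2⟩
    · have hmid : (a + b) / 2 ∈ Set.Ioo a b := ⟨by linarith, by linarith⟩
      have hmidC : (a + b) / 2 ∈ C := by
        by_contra h
        exact hcase ⟨(a + b) / 2, hmid, h⟩
      obtain ⟨t, ht1, ht2⟩ :=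
        _root_.mem_closure_iff.1 hmidC (Set.Ioo a b) isOpen_Ioo hmid
      exact ⟨t, Or.inl ht2, ht1.1, ht1.2⟩
  haveI : Countable ↥Y := hY_cnt.to_subtype
  haveI : Nonempty ↥Y := ⟨⟨e (Classical.arbitrary M), Or.inl ⟨_, rfl⟩⟩⟩
  haveI : DenselyOrdered ↥Y := by
    constructor
    rintro ⟨a, ha⟩ ⟨b, hb⟩ hab
    obtain ⟨y, hy, h1, h2⟩ := hbtwn a b hab
    exact ⟨⟨y, hy⟩, h1, h2⟩
  haveI : NoMinOrder ↥Y := by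
    constructor
    rintro ⟨a, ha⟩
    obtain ⟨y, hy, h1, h2⟩ := hbtwn (a - 1) a (by linarith)
    exact ⟨⟨y, hy⟩, h2⟩
  haveI : NoMaxOrder ↥Y := by
    constructor
    rintro ⟨a, ha⟩
    obtain ⟨y, hy, h1, h2⟩ := hbtwn a (a + 1) (by linarith)
    exact ⟨⟨y, hy⟩, h1⟩
  haveI : OrderTopology ↥Y :=
    induced_orderTopology _ Iff.rfl <| @fun a b hab => by
      obtain ⟨y, hy, h1, h2⟩ := hbtwn a b hab
      exact ⟨⟨y, hy⟩, h1, h2⟩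
  obtain ⟨φ⟩ := Order.iso_of_countable_dense ↥Y ℚ
  set H := φ.toHomeomorph with hH
  have hmem : ∀ m : M, e m ∈ Y := fun m => Or.inl ⟨m, rfl⟩
  set e' : M → ↥Y := Set.codRestrict e Y hmem with he'
  have he'_emb : Topology.IsEmbedding e' := he.codRestrict Y hmem
  have hrange : Set.range e' = Subtype.val ⁻¹' C := by
    ext ⟨y, hy⟩
    simp only [Set.mem_range, Set.mem_preimage]
    constructor
    · rintro ⟨m, hm⟩
      have : e m = y := congrArg Subtype.val hm
      exact subset_closure ⟨m, this⟩
    · intro hyC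
      rcases hy with hyT | hyD
      · obtain ⟨m, hm⟩ := hyT
        exact ⟨m, Subtype.ext hm⟩
      · exact absurd hyC (hDC hyD)
  have hrange_closed : IsClosed (Set.range e') := by
    rw [hrange]; exact isClosed_closure.preimage continuous_subtype_val
  have hf_emb : Topology.IsEmbedding (H ∘ e') := H.isEmbedding.comp he'_emb
  refine ⟨Set.range (H ∘ e'), ?_, ⟨Topology.IsEmbedding.toHomeomorph hf_emb⟩⟩
  rw [Set.range_comp]
  exact H.isClosed_image.2 hrange_closed
end

section
/- Let X be a compact scattered space (equivalently, of some scattered height) and suppose a regular space Z is X-selective. Then every open subspace of Z is X-selective. In particular, every open subspace of an L-selective regular space is L-selective. -/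
open Topology Filter Set

section CB

universe u
variable {X : Type u} [TopologicalSpace X]

/-- Derived set: points of `s` that are not isolated in `s`. -/
def dSet (s : Set X) : Set X :=
  {x | x ∈ s ∧ ∀ U : Set X, IsOpen U → x ∈ U → ((U ∩ s) \ {x}).Nonempty}

lemma dSet_subset (s : Set X) : dSet s ⊆ s := fun _ h => h.1

lemma dSet_mono {s t : Set X} (h : s ⊆ t) : dSet s ⊆ dSet t := by
  rintro x ⟨hx, h2⟩
  refine ⟨h hx, fun U hU hxU => ?_⟩
  obtain ⟨y, hy1, hy2⟩ := h2 U hU hxU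
  exact ⟨y, ⟨hy1.1, h hy1.2⟩, hy2⟩

lemma isClosed_dSet {s : Set X} (hs : IsClosed s) : IsClosed (dSet s) := by
  rw [← isOpen_compl_iff, isOpen_iff_forall_mem_open]
  intro x hx
  by_cases hxs : x ∈ s
  · have h2 : ¬ ∀ U : Set X, IsOpen U → x ∈ U → ((U ∩ s) \ {x}).Nonempty := by
      intro hall; exact hx ⟨hxs, hall⟩
    push_neg at h2
    obtain ⟨U, hUo, hxU, hU2⟩ := h2
    refine ⟨U, fun y hy hyD => ?_, hUo, hxU⟩
    have hyx : y = x := by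
      by_contra hne
      have hmem : y ∈ (U ∩ s) \ {x} := ⟨⟨hy, hyD.1⟩, hne⟩
      rw [hU2] at hmem
      exact hmem
    exact hx (hyx ▸ hyD)
  · exact ⟨sᶜ, fun y hy hyD => hy hyD.1, hs.isOpen_compl, hxs⟩

/-- Cantor–Bendixson iteration of the derived set operator starting from `A`. -/
noncomputable def cbIter (A : Set X) (o : Ordinal.{u}) : Set X :=
  Ordinal.limitRecOn o A (fun _ ih => dSet ih)
    (fun o' _ ih => ⋂ p : {o'' // o'' < o'}, ih p.1 p.2)

@[simp] lemma cbIter_zero (A : Set X) : cbIter A 0 = A :=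
  Ordinal.limitRecOn_zero ..

@[simp] lemma cbIter_succ (A : Set X) (o : Ordinal.{u}) :
    cbIter A (Order.succ o) = dSet (cbIter A o) :=
  Ordinal.limitRecOn_succ ..

lemma cbIter_limit (A : Set X) {o : Ordinal.{u}} (ho : Order.IsSuccLimit o) :
    cbIter A o = ⋂ p : {o'' // o'' < o}, cbIter A p.1 :=
  Ordinal.limitRecOn_limit _ _ _ _ ho

lemma cbIter_subset (A : Set X) (o : Ordinal.{u}) : cbIter A o ⊆ A := by
  induction o using Ordinal.induction with
  | _ o IH =>
    rcases Ordinal.zero_or_succ_or_isSuccLimit o with rfl | ⟨a, rfl⟩ | ho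
    · simp
    · rw [cbIter_succ]; exact (dSet_subset _).trans (IH a (Order.lt_succ a))
    · rw [cbIter_limit A ho]
      exact (iInter_subset _ ⟨0, ho.pos⟩).trans (by simp)

lemma cbIter_anti (A : Set X) (o₂ : Ordinal.{u}) :
    ∀ o₁ ≤ o₂, cbIter A o₂ ⊆ cbIter A o₁ := by
  induction o₂ using Ordinal.induction with
  | _ o₂ IH =>
    intro o₁ h
    rcases eq_or_lt_of_le h with rfl | hlt
    · exact subset_rfl
    rcases Ordinal.zero_or_succ_or_isSuccLimit o₂ with rfl | ⟨a, rfl⟩ | ho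
    · exact absurd hlt (not_lt_zero (a := o₁))
    · rw [cbIter_succ]
      exact (dSet_subset _).trans (IH a (Order.lt_succ a) o₁ (Order.lt_succ_iff.mp hlt))
    · rw [cbIter_limit A ho]
      exact iInter_subset (fun p : {o'' // o'' < o₂} => cbIter A p.1) ⟨o₁, hlt⟩

lemma cbIter_mono {A B : Set X} (h : A ⊆ B) (o : Ordinal.{u}) :
    cbIter A o ⊆ cbIter B o := by
  induction o using Ordinal.induction with
  | _ o IH =>
    rcases Ordinal.zero_or_succ_or_isSuccLimit o with rfl | ⟨a, rfl⟩ | ho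
    · simpa
    · rw [cbIter_succ, cbIter_succ]; exact dSet_mono (IH a (Order.lt_succ a))
    · rw [cbIter_limit A ho, cbIter_limit B ho]
      exact iInter_mono fun p => IH p.1 p.2

lemma isClosed_cbIter {A : Set X} (hA : IsClosed A) (o : Ordinal.{u}) :
    IsClosed (cbIter A o) := by
  induction o using Ordinal.induction with
  | _ o IH =>
    rcases Ordinal.zero_or_succ_or_isSuccLimit o with rfl | ⟨a, rfl⟩ | ho
    · simpa
    · rw [cbIter_succ]; exact isClosed_dSet (IH a (Order.lt_succ a))
    · rw [cbIter_limit A ho]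
      exact isClosed_iInter fun p => IH p.1 p.2

lemma exists_cbIter_eq_empty
    (hscat : ∀ s : Set X, s.Nonempty → ∃ x ∈ s, ∃ U : Set X, IsOpen U ∧ U ∩ s = {x})
    (A : Set X) : ∃ o : Ordinal.{u}, cbIter A o = ∅ := by
  by_contra hcon
  push_neg at hcon
  have hiso : ∀ o : Ordinal.{u}, ∃ x, x ∈ cbIter A o ∧ x ∉ dSet (cbIter A o) := by
    intro o
    obtain ⟨x, hx, U, hUo, hUs⟩ := hscat _ (hcon o)
    have hxU : x ∈ U := by
      have hx' : x ∈ U ∩ cbIter A o := by rw [hUs]; exact rfl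
      exact hx'.1
    refine ⟨x, hx, fun hxd => ?_⟩
    obtain ⟨y, hy1, hy2⟩ := hxd.2 U hUo hxU
    rw [hUs] at hy1
    exact hy2 hy1
  choose wit hwit1 hwit2 using hiso
  have hinj : Function.Injective (cbIter A) := by
    have hne : ∀ {o₁ o₂ : Ordinal.{u}}, o₁ < o₂ → cbIter A o₂ ≠ cbIter A o₁ := by
      intro o₁ o₂ hlt he
      have h1 : cbIter A o₂ ⊆ dSet (cbIter A o₁) := by
        rw [← cbIter_succ]
        exact cbIter_anti A o₂ _ (Order.succ_le_of_lt hlt)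
      exact hwit2 o₁ (h1 (by rw [he]; exact hwit1 o₁))
    intro o₁ o₂ he
    rcases lt_trichotomy o₁ o₂ with h | h | h
    · exact absurd he.symm (hne h)
    · exact h
    · exact absurd he (hne h)
  have hsmall : Small.{u} Ordinal.{u} := small_of_injective (β := Set X) hinj
  exact not_small_ordinal.{u, u} hsmall

end CB

section Key

lemma isLSC_inter_graph {X Z : Type*} [TopologicalSpace X] [TopologicalSpace Z]
    {φ : X → Set Z} (hφ : IsLSC φ) {G : Set (X × Z)} (hG : IsOpen G) :
    IsLSC fun x => φ x ∩ {z | (x, z) ∈ G} := by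
  intro U hU
  rw [isOpen_iff_forall_mem_open]
  rintro x ⟨z, ⟨hzφ, hzG⟩, hzU⟩
  obtain ⟨N, W, hN, hW, hxN, hzW, hsub⟩ := isOpen_prod_iff.mp hG x z hzG
  refine ⟨N ∩ {y | (φ y ∩ (W ∩ U)).Nonempty}, ?_, hN.inter (hφ _ (hW.inter hU)),
    ⟨hxN, ⟨z, hzφ, hzW, hzU⟩⟩⟩
  rintro y ⟨hyN, z', hz'φ, hz'W, hz'U⟩
  exact ⟨z', ⟨hz'φ, hsub (Set.mk_mem_prod hyN hz'W)⟩, hz'U⟩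

universe u v

lemma key_graph {X : Type u} {Z : Type v} [TopologicalSpace X] [CompactSpace X]
    [TopologicalSpace Z] [RegularSpace Z] {V : Set Z} (hV : IsOpen V) (o : Ordinal.{u}) :
    ∀ A : Set X, IsClosed A → cbIter A o = ∅ →
      ∀ φ : X → Set Z, IsLSC φ → (∀ a ∈ A, (φ a).Nonempty ∧ φ a ⊆ V) →
      ∃ G : Set (X × Z), IsOpen G ∧ (∀ x, closure {z | (x, z) ∈ G} ⊆ V) ∧
        ∀ a ∈ A, (φ a ∩ {z | (a, z) ∈ G}).Nonempty := by
  induction o using Ordinal.induction with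
  | _ o IH =>
  intro A hAc hAo φ hφ hφA
  rcases A.eq_empty_or_nonempty with rfl | hAne
  · exact ⟨∅, isOpen_empty, fun x => by simp, fun a ha => absurd ha (notMem_empty a)⟩
  rcases Ordinal.zero_or_succ_or_isSuccLimit o with rfl | ⟨τ, rfl⟩ | ho
  · rw [cbIter_zero] at hAo
    exact absurd hAo hAne.ne_empty
  · -- successor case
    rcases Set.eq_empty_or_nonempty (cbIter A τ) with hτ | hTne
    · exact IH τ (Order.lt_succ τ) A hAc hτ φ hφ hφA
    have hTsub : cbIter A τ ⊆ A := cbIter_subset A τ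
    have hTc : IsClosed (cbIter A τ) := isClosed_cbIter hAc τ
    have hDT : dSet (cbIter A τ) = ∅ := by rw [← cbIter_succ]; exact hAo
    set T := cbIter A τ with hTdef
    -- T is finite
    have hUex : ∀ p : X, ∃ U : Set X, IsOpen U ∧ (p ∈ T → p ∈ U) ∧ U ∩ T ⊆ {p} := by
      intro p
      by_cases hp : p ∈ T
      · have hnd : p ∉ dSet T := by rw [hDT]; exact notMem_empty p
        have h2 : ¬ ∀ U : Set X, IsOpen U → p ∈ U → ((U ∩ T) \ {p}).Nonempty :=
          fun hall => hnd ⟨hp, hall⟩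
        push_neg at h2
        obtain ⟨U, hUo, hpU, hU2⟩ := h2
        refine ⟨U, hUo, fun _ => hpU, fun y hy => ?_⟩
        by_contra hne
        have : y ∈ (U ∩ T) \ {p} := ⟨hy, hne⟩
        rw [hU2] at this
        exact this
      · exact ⟨Tᶜ, hTc.isOpen_compl, fun h => absurd h hp, fun y hy => absurd hy.2 hy.1⟩
    choose U hUo hUmem hUcap using hUex
    have hTfin : T.Finite := by
      obtain ⟨t, ht⟩ := (hTc.isCompact).elim_finite_subcover U hUo
        (fun x hx => Set.mem_iUnion.mpr ⟨x, hUmem x hx⟩)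
      refine Set.Finite.subset t.finite_toSet fun y hy => ?_
      obtain ⟨i, hit, hyU⟩ := Set.mem_iUnion₂.mp (ht hy)
      have : y = i := hUcap i ⟨hyU, hy⟩
      rwa [this]
    -- neighborhoods with closure inside V
    have hWex : ∀ p : X, ∃ W : Set Z, IsOpen W ∧ closure W ⊆ V ∧
        (p ∈ T → (φ p ∩ W).Nonempty) := by
      intro p
      by_cases hp : p ∈ T
      · obtain ⟨hne, hsub⟩ := hφA p (hTsub hp)
        obtain ⟨z, hz⟩ := hne
        obtain ⟨s, hs_nhds, hs_closed, hsV⟩ :=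
          exists_mem_nhds_isClosed_subset (hV.mem_nhds (hsub hz))
        refine ⟨interior s, isOpen_interior,
          (closure_minimal interior_subset hs_closed).trans hsV,
          fun _ => ⟨z, hz, mem_interior_iff_mem_nhds.mpr hs_nhds⟩⟩
      · exact ⟨∅, isOpen_empty, by simp, fun h => absurd h hp⟩
    choose W hWo hWV hWmeet using hWex
    have hOo : ∀ p : X, IsOpen {x | (φ x ∩ W p).Nonempty} := fun p => hφ (W p) (hWo p)
    set O : X → Set X := fun p => {x | (φ x ∩ W p).Nonempty} with hOdef
    set K := A \ ⋃ p ∈ T, O p with hKdef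
    have hKc : IsClosed K := hAc.sdiff (isOpen_biUnion fun p _ => hOo p)
    have hKiter : cbIter K τ = ∅ := by
      rw [← Set.subset_empty_iff]
      intro x hx
      have hxT : x ∈ T := cbIter_mono Set.diff_subset τ hx
      have hxK : x ∈ K := cbIter_subset K τ hx
      exact hxK.2 (Set.mem_biUnion hxT (hWmeet x hxT))
    obtain ⟨G', hG'o, hG'V, hG'meet⟩ :=
      IH τ (Order.lt_succ τ) K hKc hKiter φ hφ (fun a ha => hφA a ha.1)
    refine ⟨G' ∪ ⋃ p ∈ T, (O p) ×ˢ (W p),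
      hG'o.union (isOpen_biUnion fun p _ => (hOo p).prod (hWo p)), ?_, ?_⟩
    · intro x
      have hsub : {z | (x, z) ∈ G' ∪ ⋃ p ∈ T, (O p) ×ˢ (W p)} ⊆
          {z | (x, z) ∈ G'} ∪ ⋃ p ∈ T, W p := by
        rintro z (hz | hz)
        · exact Or.inl hz
        · obtain ⟨p, hpT, hzp⟩ := Set.mem_iUnion₂.mp hz
          exact Or.inr (Set.mem_biUnion hpT hzp.2)
      refine (closure_mono hsub).trans ?_
      rw [closure_union, hTfin.closure_biUnion]
      exact Set.union_subset (hG'V x) (Set.iUnion₂_subset fun p _ => hWV p)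
    · intro a ha
      by_cases haO : a ∈ ⋃ p ∈ T, O p
      · obtain ⟨p, hpT, hap⟩ := Set.mem_iUnion₂.mp haO
        obtain ⟨z, hzφ, hzW⟩ := hap
        exact ⟨z, hzφ, Or.inr (Set.mem_biUnion hpT (Set.mk_mem_prod ⟨z, hzφ, hzW⟩ hzW))⟩
      · obtain ⟨z, hzφ, hzG⟩ := hG'meet a ⟨ha, haO⟩
        exact ⟨z, hzφ, Or.inl hzG⟩
  · -- limit case
    have hex : ∃ o' < o, cbIter A o' = ∅ := by
      by_contra hcon
      push_neg at hcon
      haveI : Nonempty {o'' // o'' < o} := ⟨⟨0, ho.pos⟩⟩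
      have hne : (⋂ p : {o'' // o'' < o}, cbIter A p.1).Nonempty := by
        apply IsCompact.nonempty_iInter_of_directed_nonempty_isCompact_isClosed
        · intro i j
          rcases le_total i.1 j.1 with h | h
          · exact ⟨j, cbIter_anti A j.1 i.1 h, subset_rfl⟩
          · exact ⟨i, subset_rfl, cbIter_anti A i.1 j.1 h⟩
        · exact fun p => hcon p.1 p.2
        · exact fun p => (isClosed_cbIter hAc p.1).isCompact
        · exact fun p => isClosed_cbIter hAc p.1
      rw [cbIter_limit A ho] at hAo
      rw [hAo] at hne
      exact hne.ne_empty rfl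
    obtain ⟨o', ho', he⟩ := hex
    exact IH o' ho' A hAc he φ hφ hφA

end Key

/-- If `X` is a compact scattered space and the regular space `Z` is `X`-selective,
then every open subspace of `Z` is `X`-selective. -/
theorem stmt_19 {X Z : Type*} [TopologicalSpace X] [CompactSpace X]
    (hscat : ∀ s : Set X, s.Nonempty → ∃ x ∈ s, ∃ U : Set X, IsOpen U ∧ U ∩ s = {x})
    [TopologicalSpace Z] [RegularSpace Z] [T1Space Z]
    (hsel : Selective X Z) :
    ∀ V : Set Z, IsOpen V → Selective X V := by
  intro V hVopen φ₀ hne hcl hlsc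
  classical
  set φ : X → Set Z := fun x => Subtype.val '' φ₀ x with hφdef
  have hφ : IsLSC φ := by
    intro U hU
    have heq : {x | (φ x ∩ U).Nonempty} = {x | (φ₀ x ∩ (Subtype.val ⁻¹' U)).Nonempty} := by
      ext x
      simp only [Set.mem_setOf_eq]
      constructor
      · rintro ⟨z, ⟨w, hw, rfl⟩, hzU⟩; exact ⟨w, hw, hzU⟩
      · rintro ⟨w, hw, hwU⟩; exact ⟨w, ⟨w, hw, rfl⟩, hwU⟩
    rw [heq]
    exact hlsc _ (continuous_subtype_val.isOpen_preimage U hU)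
  obtain ⟨o, ho⟩ := exists_cbIter_eq_empty hscat (Set.univ : Set X)
  obtain ⟨G, hGo, hGV, hGmeet⟩ := key_graph hVopen o Set.univ isClosed_univ ho φ hφ
    (fun a _ => ⟨(hne a).image _, by rintro z ⟨w, _, rfl⟩; exact w.2⟩)
  set ψ : X → Set Z := fun x => closure (φ x ∩ {z | (x, z) ∈ G}) with hψdef
  have hψne : ∀ x, (ψ x).Nonempty := fun x => (hGmeet x (Set.mem_univ x)).closure
  have hψcl : ∀ x, IsClosed (ψ x) := fun x => isClosed_closure
  have hψlsc : IsLSC ψ := by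
    intro U hU
    have heq : {x | (ψ x ∩ U).Nonempty} =
        {x | ((fun y => φ y ∩ {z | (y, z) ∈ G}) x ∩ U).Nonempty} := by
      ext x
      simp only [Set.mem_setOf_eq, hψdef]
      constructor
      · rintro ⟨z, hz1, hz2⟩
        obtain ⟨z', hz'⟩ := mem_closure_iff.mp hz1 U hU hz2
        exact ⟨z', hz'.2, hz'.1⟩
      · rintro ⟨z, hz1, hz2⟩
        exact ⟨z, subset_closure hz1, hz2⟩
    rw [heq]
    exact isLSC_inter_graph hφ hGo U hU
  obtain ⟨g, hgc, hgmem⟩ := hsel ψ hψne hψcl hψlsc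
  have hgV : ∀ x, g x ∈ V := fun x =>
    hGV x (closure_mono Set.inter_subset_right (hgmem x))
  have hgφ : ∀ x, g x ∈ φ x := by
    intro x
    obtain ⟨C, hCcl, hCeq⟩ := isClosed_induced_iff.mp (hcl x)
    have hsubC : φ x ⊆ C := by
      rintro z ⟨w, hw, rfl⟩
      rw [← hCeq] at hw
      exact hw
    have h1 : g x ∈ closure (φ x) := closure_mono Set.inter_subset_left (hgmem x)
    have h2 : g x ∈ C := hCcl.closure_subset ((closure_mono hsubC) h1)
    have h3 : (⟨g x, hgV x⟩ : ↥V) ∈ φ₀ x := by rw [← hCeq]; exact h2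
    exact ⟨⟨g x, hgV x⟩, h3, rfl⟩
  refine ⟨fun x => ⟨g x, hgV x⟩, hgc.subtype_mk _, fun x => ?_⟩
  obtain ⟨w, hw, hwval⟩ := hgφ x
  have heq : (⟨g x, hgV x⟩ : ↥V) = w := Subtype.ext hwval.symm
  show (⟨g x, hgV x⟩ : ↥V) ∈ φ₀ x
  rw [heq]
  exact hw
end
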